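/- arXiv:2104.12989 — 10 statements merged into one kernel-verified Lean document; each statement's English description precedes it below -/
import Mathlib

section
/- (Transitivity of finite satisfiability) If tp(B/C) is finitely satisfied in M and tp(A/BC) is finitely satisfied in M, then tp(AB/C) is finitely satisfied in M. -/
open FirstOrder FirstOrder.Language Cardinal Set

universe u v w

namespace MonadicNIP

variable {L : FirstOrder.Language.{u, u}} {C : Type u} [L.Structure C]

/-- The complete type of the tuple `a` over the parameter set `B`:
all formulas with parameters from `B` and variables `α` satisfied by `a`. -/
def tpSet {α : Type v} (B : Set C) (a : α → C) : Set (L.Formula (B ⊕ α)) :=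
  {φ | φ.Realize (Sum.elim (Subtype.val : B → C) a)}

/-- A set of formulas over `B` (a "type") is finitely satisfied in `M` if each of
its formulas is realized by a tuple from `M`. -/
def FinSat (M : Set C) {α : Type v} {B : Set C} (p : Set (L.Formula (B ⊕ α))) : Prop :=
  ∀ φ ∈ p, ∃ m : α → C, (∀ i, m i ∈ M) ∧
    Formula.Realize φ (Sum.elim (Subtype.val : B → C) m)

/-- `p` is a complete type over `B` (in the monster `C`): finitely satisfiable
in `C` and deciding every formula. -/
def IsCompleteType {α : Type v} (B : Set C) (p : Set (L.Formula (B ⊕ α))) : Prop :=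
  (∀ s : Finset (L.Formula (B ⊕ α)), ↑s ⊆ p →
      ∃ a : α → C, ∀ φ ∈ s, Formula.Realize φ (Sum.elim (Subtype.val : B → C) a)) ∧
    ∀ φ : L.Formula (B ⊕ α), φ ∈ p ∨ φ.not ∈ p

/-- `tp(A/B)` is finitely satisfied in `M` (formulated without an enumeration of `A`). -/
def SetFinSat (L : FirstOrder.Language.{u, u}) {C : Type u} [L.Structure C] (M B A : Set C) : Prop :=
  ∀ (n : ℕ) (φ : L.Formula (B ⊕ Fin n)) (a : Fin n → C), (∀ i, a i ∈ A) →
    φ.Realize (Sum.elim (Subtype.val : B → C) a) →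
    ∃ m : Fin n → C, (∀ i, m i ∈ M) ∧ φ.Realize (Sum.elim (Subtype.val : B → C) m)

/-- `⟨A i : i ∈ I⟩` is an `M`-f.s. sequence over `B`. -/
def IsFSSeq (L : FirstOrder.Language.{u, u}) {C : Type u} [L.Structure C] (M B : Set C) {I : Type v} [LinearOrder I] (A : I → Set C) : Prop :=
  ∀ i : I, SetFinSat L M (B ∪ ⋃ j < i, A j) (A i)

/-- The average type of an ultrafilter `U` on `M^n` over the parameter set `B`. -/
def Av {n : ℕ} {M : Set C} (U : Ultrafilter (Fin n → M)) (B : Set C) :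
    Set (L.Formula (B ⊕ Fin n)) :=
  {φ | {m : Fin n → M |
      Formula.Realize φ (Sum.elim (Subtype.val : B → C) (fun i => (m i : C)))} ∈ U}

/-- `C0` is full (for non-splitting over `M`): every complete type over `M`
in finitely many variables (realized in the monster) is realized in `C0`. -/
def IsFull (L : FirstOrder.Language.{u, u}) {C : Type u} [L.Structure C] (M C0 : Set C) : Prop :=
  ∀ (n : ℕ) (a : Fin n → C), ∃ c : Fin n → C, (∀ i, c i ∈ C0) ∧
    tpSet (L := L) M a = tpSet (L := L) M c

/-- The sequence of tuples `a` is indiscernible over `B`. -/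
def IndiscernibleOver (L : FirstOrder.Language.{u, u}) {C : Type u} [L.Structure C] {I : Type v} [LinearOrder I] {α : Type w} (B : Set C)
    (a : I → α → C) : Prop :=
  ∀ (n : ℕ) (i j : Fin n → I), StrictMono i → StrictMono j →
    tpSet (L := L) B (fun p : Fin n × α => a (i p.1) p.2) =
      tpSet (L := L) B (fun p : Fin n × α => a (j p.1) p.2)

/-- The type `p` over `B` does not split over `M0`: parameter tuples from `B`
with the same type over `M0` are interchangeable in `p`. -/
def NotSplitOver (M0 : Set C) {B : Set C} {α : Type v}
    (p : Set (L.Formula (B ⊕ α))) : Prop :=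
  ∀ (k : ℕ) (b b' : Fin k → B) (φ : L.Formula (Fin k ⊕ α)),
    tpSet (L := L) M0 (fun i => (b i : C)) = tpSet (L := L) M0 (fun i => (b' i : C)) →
    (φ.relabel (Sum.elim (fun i => Sum.inl (b i)) Sum.inr) ∈ p ↔
      φ.relabel (Sum.elim (fun i => Sum.inl (b' i)) Sum.inr) ∈ p)


/-- Helper: replace the coordinates not satisfying `P` (which lie in `Y`) by elements
of `M`, keeping the `P`-coordinates (which lie in the parameter set `X`) fixed. -/
lemma partial_step (M : Set C) {X Y : Set C} (h : SetFinSat L M X Y)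
    (n : ℕ) (φ : L.Formula (X ⊕ Fin n)) (a : Fin n → C)
    (P : Fin n → Prop) (hP : ∀ i, ¬ P i → a i ∈ Y) (hPX : ∀ i, P i → a i ∈ X)
    (hr : φ.Realize (Sum.elim (Subtype.val : X → C) a)) :
    ∃ a' : Fin n → C, (∀ i, (P i ∧ a' i = a i) ∨ (¬ P i ∧ a' i ∈ M)) ∧
      φ.Realize (Sum.elim (Subtype.val : X → C) a') := by
  classical
  by_cases hall : ∀ i, P i
  · exact ⟨a, fun i => Or.inl ⟨hall i, rfl⟩, hr⟩
  · push_neg at hall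
    obtain ⟨i0, hi0⟩ := hall
    set g : X ⊕ Fin n → X ⊕ Fin n := fun x =>
      Sum.elim (fun x => Sum.inl x)
        (fun i => if h : P i then Sum.inl ⟨a i, hPX i h⟩ else Sum.inr i) x with hg
    set a₁ : Fin n → C := fun i => if P i then a i0 else a i with ha₁
    have ha₁Y : ∀ i, a₁ i ∈ Y := by
      intro i
      by_cases h : P i <;> simp only [ha₁, h, if_pos, if_neg, not_false_iff]
      · simpa [h] using hP i0 hi0
      · simpa [h] using hP i h
    have hrel : (φ.relabel g).Realize (Sum.elim (Subtype.val : X → C) a₁) := by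
      rw [Formula.realize_relabel]
      have : (Sum.elim (Subtype.val : X → C) a₁) ∘ g
          = Sum.elim (Subtype.val : X → C) a := by
        funext x
        cases x with
        | inl x => simp [hg]
        | inr i =>
          by_cases h : P i <;> simp [hg, h, ha₁]
      rw [this]; exact hr
    obtain ⟨m, hmM, hmr⟩ := h n (φ.relabel g) a₁ ha₁Y hrel
    rw [Formula.realize_relabel] at hmr
    refine ⟨fun i => if P i then a i else m i, ?_, ?_⟩
    · intro i
      by_cases h : P i
      · exact Or.inl ⟨h, by simp [h]⟩
      · exact Or.inr ⟨h, by simpa [h] using hmM i⟩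
    · have : (Sum.elim (Subtype.val : X → C) m) ∘ g
          = Sum.elim (Subtype.val : X → C) (fun i => if P i then a i else m i) := by
        funext x
        cases x with
        | inl x => simp [hg]
        | inr i =>
          by_cases h : P i <;> simp [hg, h]
      rwa [this] at hmr

/-- Transitivity: if `tp(B/C₀)` and `tp(A/B ∪ C₀)` are finitely satisfied
in `M`, then so is `tp(A ∪ B/C₀)`. -/
theorem statement4 (M : L.ElementarySubstructure C) (C0 A B : Set C)
    (hMC : (M : Set C) ⊆ C0)
    (h1 : SetFinSat L (M : Set C) C0 B)
    (h2 : SetFinSat L (M : Set C) (B ∪ C0) A) :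
    SetFinSat L (M : Set C) C0 (A ∪ B) := by
  classical
  intro n φ a haAB hra
  -- Step 1: use `h2` to move the `A`-coordinates into `M`, viewing the
  -- `B`-coordinates as parameters from `B ∪ C0`.
  set ι : C0 → (↥(B ∪ C0) : Type u) := fun c => ⟨c.1, Or.inr c.2⟩ with hι
  set φ₁ : L.Formula (↥(B ∪ C0) ⊕ Fin n) := φ.relabel (Sum.map ι id) with hφ₁
  have hra₁ : φ₁.Realize (Sum.elim (Subtype.val : ↥(B ∪ C0) → C) a) := by
    rw [hφ₁, Formula.realize_relabel]
    have : (Sum.elim (Subtype.val : ↥(B ∪ C0) → C) a) ∘ (Sum.map ι id)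
        = Sum.elim (Subtype.val : C0 → C) a := by
      funext x; cases x with
      | inl x => simp [hι]
      | inr i => simp
    rwa [this]
  obtain ⟨a₂, ha₂, hra₂⟩ := partial_step (M : Set C) h2 n φ₁ a
    (fun i => a i ∈ B)
    (fun i hi => (haAB i).resolve_right hi)
    (fun i hi => Or.inl hi) hra₁
  -- back to parameters from `C0`
  have hra₂' : φ.Realize (Sum.elim (Subtype.val : C0 → C) a₂) := by
    rw [hφ₁, Formula.realize_relabel] at hra₂
    have : (Sum.elim (Subtype.val : ↥(B ∪ C0) → C) a₂) ∘ (Sum.map ι id)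
        = Sum.elim (Subtype.val : C0 → C) a₂ := by
      funext x; cases x with
      | inl x => simp [hι]
      | inr i => simp
    rwa [this] at hra₂
  -- Step 2: use `h1` to move the `B`-coordinates into `M`, viewing the
  -- already-moved `A`-coordinates (now in `M ⊆ C0`) as parameters from `C0`.
  obtain ⟨a₃, ha₃, hra₃⟩ := partial_step (M : Set C) h1 n φ a₂
    (fun i => ¬ (a i ∈ B))
    (fun i hi => by
      rcases ha₂ i with ⟨hB, he⟩ | ⟨hB, _⟩
      · rw [he]; exact hB
      · exact absurd hB hi)
    (fun i hi => by
      rcases ha₂ i with ⟨hB, _⟩ | ⟨_, hM⟩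
      · exact absurd hB hi
      · exact hMC hM) hra₂'
  refine ⟨a₃, fun i => ?_, hra₃⟩
  rcases ha₃ i with ⟨hB, he⟩ | ⟨_, hM⟩
  · rw [he]
    rcases ha₂ i with ⟨hB', _⟩ | ⟨_, hM⟩
    · exact absurd hB' hB
    · exact hM
  · exact hM

end MonadicNIP
end

section
/- Suppose M ⪯ N and ⟨A_i : i ∈ I⟩ is an M-f.s. sequence (indexed by a linear order I) with M ∪ ⋃_{i∈I} A_i = N. Then for every initial segment I₀ ⊆ I, the set M ∪ ⋃_{i ∈ I₀} A_i is the universe of an elementary substructure of N. -/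
open FirstOrder FirstOrder.Language Cardinal Set

universe u v w

namespace MonadicNIP

variable {L : FirstOrder.Language.{u, u}} {C : Type u} [L.Structure C]

/-- If `M ⪯ N` and `⟨A_i : i ∈ I⟩` is an `M`-f.s. sequence with
`M ∪ ⋃ᵢ A_i = N`, then for every initial segment `I₀ ⊆ I`, the set `M ∪ ⋃_{i ∈ I₀} A_i`
is the universe of an elementary substructure of `N`. -/
theorem statement5 (M N : L.ElementarySubstructure C) (hMN : (M : Set C) ⊆ (N : Set C))
    {I : Type v} [LinearOrder I] (A : I → Set C)
    (hfs : IsFSSeq L (M : Set C) (M : Set C) A)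
    (hN : (M : Set C) ∪ (⋃ i, A i) = (N : Set C))
    (I0 : Set I) (hI0 : IsLowerSet I0) :
    ∃ S : L.ElementarySubstructure C,
      (S : Set C) = (M : Set C) ∪ ⋃ i ∈ I0, A i ∧ (S : Set C) ⊆ (N : Set C) := by
  classical
  set D : Set C := (M : Set C) ∪ ⋃ i ∈ I0, A i with hD
  have hDN : D ⊆ (N : Set C) := by
    rw [← hN]
    apply union_subset_union_right
    exact iUnion_subset fun i => iUnion_subset fun _ => subset_iUnion A i
  -- Key Tarski–Vaught style claim
  have key : ∀ (n : ℕ) (φ : L.BoundedFormula Empty (n + 1)) (b : Fin n → C),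
      (∀ i, b i ∈ D) → ∀ a : C, φ.Realize default (Fin.snoc b a) →
      ∃ a', a' ∈ D ∧ φ.Realize default (Fin.snoc b a') := by
    intro n φ b hb a ha
    -- Step 1: find a witness in N
    have hbN : ∀ i, b i ∈ (N : Set C) := fun i => hDN (hb i)
    set bN : Fin n → N := fun i => ⟨b i, hbN i⟩ with hbNdef
    have hcomp : (Subtype.val : N → C) ∘ bN = b := rfl
    have hexC : φ.ex.Realize (default : Empty → C) b := by
      rw [BoundedFormula.realize_ex]; exact ⟨a, ha⟩
    have hexN : φ.ex.Realize (default : Empty → (N : L.ElementarySubstructure C)) bN := by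
      have := (N.subtype.map_boundedFormula φ.ex (v := default) (xs := bN))
      rw [← this]
      have hv : (N.subtype ∘ (default : Empty → N)) = (default : Empty → C) :=
        funext fun x => x.elim
      have hx : (N.subtype ∘ bN) = b := rfl
      rw [hv, hx]; exact hexC
    rw [BoundedFormula.realize_ex] at hexN
    obtain ⟨aN, haN⟩ := hexN
    have haC : φ.Realize (default : Empty → C) (Fin.snoc b (aN : C)) := by
      have := (N.subtype.map_boundedFormula φ (v := default) (xs := Fin.snoc bN aN)).2 haN
      have hv : (N.subtype ∘ (default : Empty → N)) = (default : Empty → C) :=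
        funext fun x => x.elim
      have hx : (N.subtype ∘ Fin.snoc bN aN) = Fin.snoc b (aN : C) := by
        have : (Subtype.val : N → C) ∘ Fin.snoc bN aN = Fin.snoc ((Subtype.val : N → C) ∘ bN) (aN : C) :=
          Fin.comp_snoc _ _ _
        exact this
      rwa [hv, hx] at this
    -- The witness aN lies in N = M ∪ ⋃ A i
    have haNmem : (aN : C) ∈ (M : Set C) ∪ ⋃ i, A i := by rw [hN]; exact aN.2
    rcases haNmem with hM | hA
    · exact ⟨aN, Or.inl hM, haC⟩
    · rw [mem_iUnion] at hA
      obtain ⟨j, hj⟩ := hA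
      by_cases hjI0 : j ∈ I0
      · exact ⟨aN, Or.inr (mem_biUnion hjI0 hj), haC⟩
      · -- use finite satisfiability at j
        set B : Set C := (M : Set C) ∪ ⋃ j' < j, A j' with hB
        have hDB : D ⊆ B := by
          apply union_subset_union_right
          refine iUnion_subset fun i => iUnion_subset fun hi => ?_
          have hij : i < j := by
            rcases lt_or_ge i j with h | h
            · exact h
            · exact absurd (hI0 h hi) hjI0
          intro x hx; exact mem_biUnion hij hx
        have hbB : ∀ i, b i ∈ B := fun i => hDB (hb i)
        -- build the formula over B ⊕ Fin 1
        set g : Empty ⊕ Fin (n + 1) → B ⊕ Fin 1 :=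
          Sum.elim Empty.elim (fun i =>
            if h : (i : ℕ) < n then Sum.inl ⟨b ⟨(i : ℕ), h⟩, hbB ⟨(i : ℕ), h⟩⟩ else Sum.inr 0) with hg
        set ψ : L.Formula (B ⊕ Fin 1) := φ.toFormula.relabel g with hψ
        have hrealize : ∀ c : Fin 1 → C,
            ψ.Realize (Sum.elim (Subtype.val : B → C) c) ↔
              φ.Realize (default : Empty → C) (Fin.snoc b (c 0)) := by
          intro c
          rw [hψ, Formula.realize_relabel, BoundedFormula.realize_toFormula]
          have h1 : ((Sum.elim (Subtype.val : B → C) c ∘ g) ∘ Sum.inl) =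
              (default : Empty → C) := funext fun x => x.elim
          have h2 : ((Sum.elim (Subtype.val : B → C) c ∘ g) ∘ Sum.inr) =
              Fin.snoc b (c 0) := by
            funext i
            by_cases h : (i : ℕ) < n <;> simp [hg, h, Fin.snoc, Fin.castLT]
          rw [h1, h2]
        obtain ⟨m, hmM, hmψ⟩ := hfs j 1 ψ (fun _ => (aN : C)) (fun _ => hj)
          ((hrealize _).2 haC)
        exact ⟨m 0, Or.inl (hmM 0), (hrealize m).1 hmψ⟩
  -- D is closed under functions
  have hfun : ∀ {k : ℕ} (f : L.Functions k) (x : Fin k → C),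
      (∀ i, x i ∈ D) → Structure.funMap f x ∈ D := by
    intro k f x hx
    set φ : L.BoundedFormula Empty (k + 1) :=
      Term.bdEqual (Term.func f (fun i => Term.var (Sum.inr i.castSucc)))
        (Term.var (Sum.inr (Fin.last k))) with hφ
    have h0 : φ.Realize (default : Empty → C) (Fin.snoc x (Structure.funMap f x)) := by
      simp [hφ, BoundedFormula.realize_bdEqual, Term.realize]
    obtain ⟨a', ha'D, ha'⟩ := key k φ x hx _ h0
    have heq : Structure.funMap f x = a' := by
      simpa [hφ, BoundedFormula.realize_bdEqual, Term.realize] using ha'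
    rwa [heq]
  let S0 : L.Substructure C :=
    { carrier := D, fun_mem := fun {k} f x hx => hfun f x hx }
  have htv : ∀ (n : ℕ) (φ : L.BoundedFormula Empty (n + 1)) (x : Fin n → S0) (a : C),
      φ.Realize default (Fin.snoc ((↑) ∘ x) a : _ → C) →
        ∃ b : S0, φ.Realize default (Fin.snoc ((↑) ∘ x) b : _ → C) := by
    intro n φ x a ha
    obtain ⟨a', ha'D, ha'⟩ := key n φ (fun i => (x i : C)) (fun i => (x i).2) a ha
    exact ⟨⟨a', ha'D⟩, ha'⟩
  exact ⟨S0.toElementarySubstructure htv, rfl, hDN⟩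

end MonadicNIP
end

section
/- Suppose C ⊇ M is full for non-splitting over M and p ∈ S(C) is finitely satisfied in M. Then for any set D ⊇ C there is a unique complete type q ∈ S(D) extending p that is finitely satisfied in M; moreover φ(x̄, d̄) ∈ q if and only if φ(x̄, c̄) ∈ p for some (equivalently every) c̄ from C with tp(d̄/M) = tp(c̄/M). -/
open FirstOrder FirstOrder.Language Cardinal Set

universe u v w

namespace MonadicNIP

variable {L : FirstOrder.Language.{u, u}} {C : Type u} [L.Structure C]

/-! A type finitely satisfied in `M` does not split over `M`, so in a finitely satisfied complete
extension `q` of `p` the truth of `φ(x̄, d̄)` depends only on `tp(d̄/M)`. As `C0` is full, that type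
is realized by some `c̄` in `C0`, and `φ(x̄, d̄) ∈ q` exactly when `φ(x̄, c̄) ∈ p`; this gives
uniqueness and the description. For existence, the sets of realizations in `M` of the formulas
of `p` form a filter base, and the average type over `D` of an ultrafilter refining it extends `p`. -/

section

variable {α : Type v}

def withParams {B : Set C} {k : ℕ} (χ : L.Formula (Fin k ⊕ α)) (b : Fin k → B) :
    L.Formula (B ⊕ α) :=
  χ.relabel (Sum.elim (fun i => Sum.inl (b i)) Sum.inr)

@[simp]
lemma realize_withParams {B : Set C} {k : ℕ} (χ : L.Formula (Fin k ⊕ α)) (b : Fin k → B)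
    (v : α → C) :
    (withParams χ b).Realize (Sum.elim (Subtype.val : B → C) v) ↔
      χ.Realize (Sum.elim (fun i => (b i : C)) v) := by
  rw [withParams, Formula.realize_relabel]
  exact Iff.of_eq (congrArg _ (by funext x; cases x <;> rfl))

@[simp]
lemma realize_relabel_inclusion {B D : Set C} (h : B ⊆ D) (φ : L.Formula (B ⊕ α))
    (v : α → C) :
    (φ.relabel (Sum.map (Set.inclusion h) id)).Realize (Sum.elim (Subtype.val : D → C) v) ↔
      φ.Realize (Sum.elim (Subtype.val : B → C) v) := by
  rw [Formula.realize_relabel]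
  exact Iff.of_eq (congrArg _ (by funext x; cases x <;> rfl))

lemma exists_withParams_realize_iff {B : Set C} (ψ : L.Formula (B ⊕ α)) :
    ∃ (k : ℕ) (χ : L.Formula (Fin k ⊕ α)) (d : Fin k → B),
      ∀ v : α → C, ψ.Realize (Sum.elim (Subtype.val : B → C) v) ↔
        (withParams χ d).Realize (Sum.elim (Subtype.val : B → C) v) := by
  classical
  set e := ψ.freeVarFinset.toLeft.equivFin
  let f : ψ.freeVarFinset → Fin ψ.freeVarFinset.toLeft.card ⊕ α := fun x =>
    Sum.casesOn (motive := fun y => y ∈ ψ.freeVarFinset → _) x.1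
      (fun b hb => Sum.inl (e ⟨b, Finset.mem_toLeft.2 hb⟩)) (fun a _ => Sum.inr a) x.2
  refine ⟨_, ψ.restrictFreeVar f, fun i => e.symm i, fun v => ?_⟩
  rw [realize_withParams]
  refine (BoundedFormula.realize_restrictFreeVar _ fun x => ?_).symm
  obtain ⟨b | a, hx⟩ := x <;> simp [f]

namespace IsCompleteType

variable {B : Set C} {r : Set (L.Formula (B ⊕ α))}

lemma mem_of_forall_realize (hr : IsCompleteType B r) (s : Finset (L.Formula (B ⊕ α)))
    (hs : ↑s ⊆ r) {ψ : L.Formula (B ⊕ α)}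
    (h : ∀ v : α → C, (∀ φ ∈ s, φ.Realize (Sum.elim (Subtype.val : B → C) v)) →
      ψ.Realize (Sum.elim (Subtype.val : B → C) v)) :
    ψ ∈ r := by
  classical
  refine (hr.2 ψ).resolve_right fun hn => ?_
  obtain ⟨v, hv⟩ := hr.1 (insert ψ.not s) (by simpa [Set.insert_subset_iff] using ⟨hn, hs⟩)
  have hnot := hv ψ.not (Finset.mem_insert_self _ _)
  rw [Formula.realize_not] at hnot
  exact hnot (h v fun φ hφ => hv φ (Finset.mem_insert_of_mem hφ))

lemma not_mem_iff (hr : IsCompleteType B r) {φ : L.Formula (B ⊕ α)} :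
    φ.not ∈ r ↔ φ ∉ r := by
  classical
  refine ⟨fun hn hφ => ?_, (hr.2 φ).resolve_left⟩
  obtain ⟨v, hv⟩ := hr.1 {φ, φ.not} (by simpa [Set.insert_subset_iff] using ⟨hφ, hn⟩)
  exact Formula.realize_not.1 (hv φ.not (by simp)) (hv φ (by simp))

lemma mem_iff_of_realize_iff (hr : IsCompleteType B r) {φ ψ : L.Formula (B ⊕ α)}
    (h : ∀ v : α → C, φ.Realize (Sum.elim (Subtype.val : B → C) v) ↔
      ψ.Realize (Sum.elim (Subtype.val : B → C) v)) :
    φ ∈ r ↔ ψ ∈ r :=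
  ⟨fun hφ => hr.mem_of_forall_realize {φ} (by simpa using hφ) fun v hv =>
      (h v).1 (by simpa using hv),
    fun hψ => hr.mem_of_forall_realize {ψ} (by simpa using hψ) fun v hv =>
      (h v).2 (by simpa using hv)⟩

lemma top_mem (hr : IsCompleteType B r) : (⊤ : L.Formula (B ⊕ α)) ∈ r :=
  hr.mem_of_forall_realize ∅ (by simp) fun _ _ => Formula.realize_top.2 trivial

lemma inf_mem (hr : IsCompleteType B r) {φ ψ : L.Formula (B ⊕ α)} (hφ : φ ∈ r) (hψ : ψ ∈ r) :
    φ ⊓ ψ ∈ r := by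
  classical
  refine hr.mem_of_forall_realize {φ, ψ} (by simpa [Set.insert_subset_iff] using ⟨hφ, hψ⟩)
    fun v hv => ?_
  rw [Formula.realize_inf]
  exact ⟨hv φ (by simp), hv ψ (by simp)⟩

end IsCompleteType

lemma realize_iff_of_tpSet_eq {M0 : Set C} {k : ℕ} {a b : Fin k → C}
    (h : tpSet (L := L) M0 a = tpSet (L := L) M0 b) (χ : L.Formula (Fin k ⊕ α))
    {m : α → C} (hm : ∀ i, m i ∈ M0) :
    χ.Realize (Sum.elim a m) ↔ χ.Realize (Sum.elim b m) := by
  let χM : L.Formula (M0 ⊕ Fin k) :=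
    χ.relabel (Sum.elim Sum.inr fun i => Sum.inl ⟨m i, hm i⟩)
  have hχM : ∀ c : Fin k → C,
      χM.Realize (Sum.elim (Subtype.val : M0 → C) c) ↔ χ.Realize (Sum.elim c m) := fun c => by
    rw [Formula.realize_relabel]
    exact Iff.of_eq (congrArg _ (by funext x; cases x <;> rfl))
  rw [← hχM, ← hχM]
  exact Set.ext_iff.mp h χM

/-- A witness in `M0` for `χ(x, b) ∧ ¬χ(x, b')` would separate `b` from `b'` over `M0`. -/
lemma IsCompleteType.notSplitOver {M0 B : Set C} {r : Set (L.Formula (B ⊕ α))}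
    (hr : IsCompleteType B r) (hfs : FinSat M0 r) : NotSplitOver M0 r := by
  suffices ∀ (k : ℕ) (b b' : Fin k → B) (χ : L.Formula (Fin k ⊕ α)),
      tpSet (L := L) M0 (fun i => (b i : C)) = tpSet (L := L) M0 (fun i => (b' i : C)) →
      withParams χ b ∈ r → withParams χ b' ∈ r from
    fun k b b' χ h => ⟨this k b b' χ h, this k b' b χ h.symm⟩
  intro k b b' χ h hb
  by_contra hb'
  obtain ⟨m, hm, hreal⟩ := hfs _ (hr.inf_mem hb (hr.not_mem_iff.2 hb'))
  rw [Formula.realize_inf, Formula.realize_not, realize_withParams, realize_withParams] at hreal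
  exact hreal.2 ((realize_iff_of_tpSet_eq h χ hm).1 hreal.1)

section Extension

variable {M0 B D : Set C} (hBD : B ⊆ D) {p : Set (L.Formula (B ⊕ α))}
  {q : Set (L.Formula (D ⊕ α))}

lemma relabel_inclusion_mem_iff (hp : IsCompleteType B p) (hq : IsCompleteType D q)
    (hext : ∀ φ ∈ p, φ.relabel (Sum.map (Set.inclusion hBD) id) ∈ q) (φ : L.Formula (B ⊕ α)) :
    φ.relabel (Sum.map (Set.inclusion hBD) id) ∈ q ↔ φ ∈ p := by
  refine ⟨fun hφ => ?_, hext φ⟩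
  by_contra hφp
  have hnot := hext _ (hp.not_mem_iff.2 hφp)
  rw [hq.mem_iff_of_realize_iff (ψ := (φ.relabel (Sum.map (Set.inclusion hBD) id)).not)
    (by simp), hq.not_mem_iff] at hnot
  exact hnot hφ

lemma withParams_mem_iff_of_tpSet_eq (hp : IsCompleteType B p) (hq : IsCompleteType D q)
    (hfs : FinSat M0 q) (hext : ∀ φ ∈ p, φ.relabel (Sum.map (Set.inclusion hBD) id) ∈ q)
    {k : ℕ} (χ : L.Formula (Fin k ⊕ α)) {d : Fin k → D} {c : Fin k → B}
    (h : tpSet (L := L) M0 (fun i => (d i : C)) = tpSet (L := L) M0 (fun i => (c i : C))) :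
    withParams χ d ∈ q ↔ withParams χ c ∈ p :=
  calc withParams χ d ∈ q ↔ withParams χ (Set.inclusion hBD ∘ c) ∈ q :=
        hq.notSplitOver hfs k d _ χ h
    _ ↔ (withParams χ c).relabel (Sum.map (Set.inclusion hBD) id) ∈ q :=
        hq.mem_iff_of_realize_iff fun v => by
          rw [realize_relabel_inclusion, realize_withParams, realize_withParams]; rfl
    _ ↔ withParams χ c ∈ p := relabel_inclusion_mem_iff hBD hp hq hext _

end Extension

section Average

variable {M0 : Set C}

def realizingSet (B : Set C) (φ : L.Formula (B ⊕ α)) : Set (α → M0) :=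
  {m | φ.Realize (Sum.elim (Subtype.val : B → C) fun i => (m i : C))}

/-- `Av` for an arbitrary variable type `α`. -/
def avType (U : Ultrafilter (α → M0)) (D : Set C) : Set (L.Formula (D ⊕ α)) :=
  {φ | realizingSet D φ ∈ U}

lemma isCompleteType_avType (U : Ultrafilter (α → M0)) (D : Set C) :
    IsCompleteType D (avType (L := L) U D) := by
  refine ⟨fun s hs => ?_, fun φ => ?_⟩
  · obtain ⟨m, hm⟩ := U.nonempty_of_mem ((Filter.biInter_finset_mem s).2 hs)
    exact ⟨fun i => m i, fun φ hφ => Set.mem_iInter₂.1 hm φ hφ⟩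
  · refine (U.mem_or_compl_mem (realizingSet D φ)).imp id fun h => ?_
    simpa [avType, realizingSet, Set.compl_ofPred] using h

lemma finSat_avType (U : Ultrafilter (α → M0)) (D : Set C) :
    FinSat M0 (avType (L := L) U D) := fun _ hφ =>
  let ⟨m, hm⟩ := U.nonempty_of_mem hφ
  ⟨fun i => m i, fun i => (m i).2, hm⟩

/-- Since `p` is closed under conjunction and finitely satisfied in `M0`, the sets of
realizations in `M0` of its formulas form a proper filter base. -/
lemma exists_ultrafilter_subset_avType {B : Set C} {p : Set (L.Formula (B ⊕ α))}
    (hp : IsCompleteType B p) (hfs : FinSat M0 p) :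
    ∃ U : Ultrafilter (α → M0), p ⊆ avType U B := by
  let F : Filter (α → M0) :=
    { sets := {s | ∃ φ ∈ p, realizingSet B φ ⊆ s}
      univ_sets := ⟨⊤, hp.top_mem, Set.subset_univ _⟩
      sets_of_superset := fun ⟨φ, hφ, hs⟩ hst => ⟨φ, hφ, hs.trans hst⟩
      inter_sets := fun ⟨φ, hφ, hs⟩ ⟨ψ, hψ, ht⟩ => ⟨φ ⊓ ψ, hp.inf_mem hφ hψ,
        fun m hm => ⟨hs (Formula.realize_inf.1 hm).1, ht (Formula.realize_inf.1 hm).2⟩⟩ }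
  have : F.NeBot := Filter.forall_mem_nonempty_iff_neBot.1 fun s ⟨φ, hφ, hs⟩ =>
    let ⟨m, hm, hreal⟩ := hfs φ hφ
    ⟨fun i => ⟨m i, hm i⟩, hs hreal⟩
  exact ⟨Ultrafilter.of F, fun φ hφ => Ultrafilter.of_le F ⟨φ, hφ, subset_rfl⟩⟩

end Average

lemma exists_finSat_extension {M0 B D : Set C} (hBD : B ⊆ D) {p : Set (L.Formula (B ⊕ α))}
    (hp : IsCompleteType B p) (hfs : FinSat M0 p) :
    ∃ q : Set (L.Formula (D ⊕ α)), IsCompleteType D q ∧ FinSat M0 q ∧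
      ∀ φ ∈ p, φ.relabel (Sum.map (Set.inclusion hBD) id) ∈ q := by
  obtain ⟨U, hU⟩ := exists_ultrafilter_subset_avType hp hfs
  refine ⟨avType U D, isCompleteType_avType U D, finSat_avType U D, fun φ hφ => ?_⟩
  have hset : realizingSet (M0 := M0) D (φ.relabel (Sum.map (Set.inclusion hBD) id)) =
      realizingSet B φ :=
    Set.ext fun m => realize_relabel_inclusion hBD φ fun i => (m i : C)
  exact (congrArg (· ∈ U) hset).mpr (hU hφ)

section Full

variable {M0 B D : Set C} {p : Set (L.Formula (B ⊕ α))}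

lemma withParams_mem_iff_exists (hfull : IsFull L M0 B) (hBD : B ⊆ D)
    (hp : IsCompleteType B p) {q : Set (L.Formula (D ⊕ α))} (hq : IsCompleteType D q)
    (hfs : FinSat M0 q) (hext : ∀ φ ∈ p, φ.relabel (Sum.map (Set.inclusion hBD) id) ∈ q)
    {k : ℕ} (χ : L.Formula (Fin k ⊕ α)) (d : Fin k → D) :
    withParams χ d ∈ q ↔ ∃ c : Fin k → B,
      tpSet (L := L) M0 (fun i => (d i : C)) = tpSet (L := L) M0 (fun i => (c i : C)) ∧
        withParams χ c ∈ p := by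
  refine ⟨fun hd => ?_, fun ⟨c, htp, hc⟩ =>
    (withParams_mem_iff_of_tpSet_eq hBD hp hq hfs hext χ htp).2 hc⟩
  obtain ⟨c, hcB, htp⟩ := hfull k fun i => d i
  exact ⟨fun i => ⟨c i, hcB i⟩, htp,
    (withParams_mem_iff_of_tpSet_eq hBD hp hq hfs hext χ htp).1 hd⟩

lemma finSat_extension_unique (hfull : IsFull L M0 B) (hBD : B ⊆ D)
    (hp : IsCompleteType B p) {q q' : Set (L.Formula (D ⊕ α))}
    (hq : IsCompleteType D q ∧ FinSat M0 q ∧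
      ∀ φ ∈ p, φ.relabel (Sum.map (Set.inclusion hBD) id) ∈ q)
    (hq' : IsCompleteType D q' ∧ FinSat M0 q' ∧
      ∀ φ ∈ p, φ.relabel (Sum.map (Set.inclusion hBD) id) ∈ q') :
    q = q' := by
  ext ψ
  obtain ⟨k, χ, d, hψ⟩ := exists_withParams_realize_iff ψ
  rw [hq.1.mem_iff_of_realize_iff hψ, hq'.1.mem_iff_of_realize_iff hψ,
    withParams_mem_iff_exists hfull hBD hp hq.1 hq.2.1 hq.2.2,
    withParams_mem_iff_exists hfull hBD hp hq'.1 hq'.2.1 hq'.2.2]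

end Full

end

theorem statement6_general (M : L.ElementarySubstructure C) (C0 : Set C)
    (hfull : IsFull L (M : Set C) C0)
    {α : Type v} (p : Set (L.Formula (C0 ⊕ α)))
    (hp : IsCompleteType C0 p) (hfs : FinSat (M : Set C) p)
    (D : Set C) (hCD : C0 ⊆ D) :
    (∃! q : Set (L.Formula (D ⊕ α)),
        IsCompleteType D q ∧ FinSat (M : Set C) q ∧
        ∀ φ ∈ p, φ.relabel (Sum.map (Set.inclusion hCD) id) ∈ q) ∧
    ∀ q : Set (L.Formula (D ⊕ α)),
      IsCompleteType D q → FinSat (M : Set C) q →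
      (∀ φ ∈ p, φ.relabel (Sum.map (Set.inclusion hCD) id) ∈ q) →
      ∀ (k : ℕ) (φ : L.Formula (Fin k ⊕ α)) (d : Fin k → D),
        (φ.relabel (Sum.elim (fun i => Sum.inl (d i)) Sum.inr) ∈ q ↔
          ∃ c : Fin k → C0,
            tpSet (L := L) (M : Set C) (fun i => ((d i : C))) =
              tpSet (L := L) (M : Set C) (fun i => ((c i : C))) ∧
            φ.relabel (Sum.elim (fun i => Sum.inl (c i)) Sum.inr) ∈ p) ∧
        (∀ c : Fin k → C0,
            tpSet (L := L) (M : Set C) (fun i => ((d i : C))) =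
              tpSet (L := L) (M : Set C) (fun i => ((c i : C))) →
            (φ.relabel (Sum.elim (fun i => Sum.inl (d i)) Sum.inr) ∈ q ↔
              φ.relabel (Sum.elim (fun i => Sum.inl (c i)) Sum.inr) ∈ p)) := by
  obtain ⟨q, hq⟩ := exists_finSat_extension hCD hp hfs
  refine ⟨⟨q, hq, fun q' hq' => finSat_extension_unique hfull hCD hp hq' hq⟩,
    fun q hq hqfs hext k φ d => ⟨?_, fun c htp => ?_⟩⟩
  · exact withParams_mem_iff_exists hfull hCD hp hq hqfs hext φ d
  · exact withParams_mem_iff_of_tpSet_eq hCD hp hq hqfs hext φ htp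

/-- If `C0 ⊇ M` is full and `p ∈ S(C0)` is finitely satisfied in `M`, then
for any `D ⊇ C0` there is a unique complete `q ∈ S(D)` extending `p` finitely satisfied
in `M`; moreover `φ(x̄, d̄) ∈ q` iff `φ(x̄, c̄) ∈ p` for some (equivalently every) `c̄`
from `C0` with `tp(d̄/M) = tp(c̄/M)`. -/
theorem statement6 (M : L.ElementarySubstructure C) (C0 : Set C)
    (hMC : (M : Set C) ⊆ C0) (hfull : IsFull L (M : Set C) C0)
    {α : Type v} (p : Set (L.Formula (C0 ⊕ α)))
    (hp : IsCompleteType C0 p) (hfs : FinSat (M : Set C) p)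
    (D : Set C) (hCD : C0 ⊆ D) :
    (∃! q : Set (L.Formula (D ⊕ α)),
        IsCompleteType D q ∧ FinSat (M : Set C) q ∧
        ∀ φ ∈ p, φ.relabel (Sum.map (Set.inclusion hCD) id) ∈ q) ∧
    ∀ q : Set (L.Formula (D ⊕ α)),
      IsCompleteType D q → FinSat (M : Set C) q →
      (∀ φ ∈ p, φ.relabel (Sum.map (Set.inclusion hCD) id) ∈ q) →
      ∀ (k : ℕ) (φ : L.Formula (Fin k ⊕ α)) (d : Fin k → D),
        (φ.relabel (Sum.elim (fun i => Sum.inl (d i)) Sum.inr) ∈ q ↔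
          ∃ c : Fin k → C0,
            tpSet (L := L) (M : Set C) (fun i => ((d i : C))) =
              tpSet (L := L) (M : Set C) (fun i => ((c i : C))) ∧
            φ.relabel (Sum.elim (fun i => Sum.inl (c i)) Sum.inr) ∈ p) ∧
        (∀ c : Fin k → C0,
            tpSet (L := L) (M : Set C) (fun i => ((d i : C))) =
              tpSet (L := L) (M : Set C) (fun i => ((c i : C))) →
            (φ.relabel (Sum.elim (fun i => Sum.inl (d i)) Sum.inr) ∈ q ↔
              φ.relabel (Sum.elim (fun i => Sum.inl (c i)) Sum.inr) ∈ p)) :=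
  statement6_general M C0 hfull p hp hfs D hCD

end MonadicNIP
end

section
/- Suppose C ⊇ M is full and ⟨A, B⟩ is an M-f.s. sequence over C (i.e., tp(A/C) and tp(B/AC) are finitely satisfied in M). If B is partitioned as B₁ ∪ B₂ (not necessarily convex), then ⟨A, B₁, B₂⟩ is an M-f.s. sequence over C if and only if ⟨B₁, B₂⟩ is an M-f.s. sequence over C. -/
open FirstOrder FirstOrder.Language Cardinal Set

universe u v w

namespace MonadicNIP

variable {L : FirstOrder.Language.{u, u}} {C : Type u} [L.Structure C]

/-!
Only the direction from `⟨B₁, B₂⟩` to `⟨A, B₁, B₂⟩` needs an argument. A finitely satisfied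
type does not split over `M`, so in a formula `φ(b₂; c, a, b₁)` true of `b₂ ∈ B₂`, with
`c ∈ C0`, `a ∈ A`, `b₁ ∈ B₁`, the tuple `(c, a)` may be replaced by a copy `(c', a')` in `C0`
with the same type over `M` (fullness), using that `tp(b₁b₂ / C0 A)` is finitely satisfied.
Now `φ(x; c', a', b₁)` is a formula over `C0 ∪ B₁`, so it is realized by some `m` in `M`.
Since `m` lies in `M`, `(c', a', m)` and `(c, a, m)` still have the same type over `M`, and
non-splitting of `tp(b₁ / C0 A)` turns `φ(m; c', a', b₁)` back into `φ(m; c, a, b₁)`.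
-/

lemma Formula.exists_finset_params {β α : Type*} (φ : L.Formula (β ⊕ α)) :
    ∃ (t : Finset β) (ψ : L.Formula (t ⊕ α)), ∀ (v : β → C) (w : α → C),
      φ.Realize (Sum.elim v w) ↔ ψ.Realize (Sum.elim (v ∘ Subtype.val) w) := by
  classical
  refine ⟨φ.freeVarFinset.toLeft, φ.restrictFreeVar fun x => Sum.casesOn x.1
    (fun b hb => Sum.inl ⟨b, by simpa using hb⟩) (fun a _ => Sum.inr a) x.2, fun v w => ?_⟩
  refine (BoundedFormula.realize_restrictFreeVar _ ?_).symm
  rintro ⟨b | a, h⟩ <;> rfl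

section Types

variable {M : Set C} {α : Type*}

lemma realize_of_tpSet_eq {x y : α → C} (h : tpSet (L := L) M x = tpSet (L := L) M y)
    {θ : L.Formula α} (hθ : θ.Realize x) : θ.Realize y := by
  have hmem : θ.relabel Sum.inr ∈ tpSet (L := L) M x := by
    simpa [tpSet, Formula.realize_relabel] using hθ
  rw [h] at hmem
  simpa [tpSet, Formula.realize_relabel] using hmem

lemma tpSet_comp_eq {β : Type*} {x y : α → C} (h : tpSet (L := L) M x = tpSet (L := L) M y)
    (f : β → α) : tpSet (L := L) M (x ∘ f) = tpSet (L := L) M (y ∘ f) := by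
  ext χ
  have key : ∀ z : α → C,
      χ ∈ tpSet (L := L) M (z ∘ f) ↔ χ.relabel (Sum.map id f) ∈ tpSet (L := L) M z := by
    intro z
    simp only [tpSet, Set.mem_ofPred_eq, Formula.realize_relabel, Sum.elim_comp_map,
      Function.comp_id]
  rw [key, key, h]

lemma tpSet_sumElim_eq {ν : Type*} {x y : α → C} (h : tpSet (L := L) M x = tpSet (L := L) M y)
    {m : ν → C} (hm : ∀ i, m i ∈ M) :
    tpSet (L := L) M (Sum.elim x m) = tpSet (L := L) M (Sum.elim y m) := by
  ext χ
  let g : M ⊕ (α ⊕ ν) → M ⊕ α := Sum.elim Sum.inl (Sum.elim Sum.inr fun j => Sum.inl ⟨m j, hm j⟩)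
  have key : ∀ z : α → C,
      χ ∈ tpSet (L := L) M (Sum.elim z m) ↔ χ.relabel g ∈ tpSet (L := L) M z := by
    intro z
    have hcomp : Sum.elim (Subtype.val : M → C) z ∘ g = Sum.elim Subtype.val (Sum.elim z m) := by
      funext i; rcases i with i | i | i <;> rfl
    simp only [tpSet, Set.mem_ofPred_eq, Formula.realize_relabel, hcomp]
  rw [key, key, h]

lemma IsFull.exists_tpSet_eq {C0 : Set C} (hfull : IsFull L M C0) [Finite α] (a : α → C) :
    ∃ c : α → C, (∀ i, c i ∈ C0) ∧ tpSet (L := L) M a = tpSet (L := L) M c := by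
  let e := Finite.equivFin α
  obtain ⟨c, hc, htp⟩ := hfull _ (a ∘ e.symm)
  refine ⟨c ∘ e, fun i => hc _, ?_⟩
  simpa [Function.comp_assoc] using tpSet_comp_eq htp e

end Types

section FinSat

variable {M D A : Set C} {κ ν : Type*}

lemma SetFinSat.exists_realize (h : SetFinSat L M D A) [Finite ν] {θ : L.Formula (κ ⊕ ν)}
    {d : κ → C} (hd : ∀ i, d i ∈ D) {a : ν → C} (ha : ∀ i, a i ∈ A)
    (hθ : θ.Realize (Sum.elim d a)) : ∃ m : ν → C, (∀ i, m i ∈ M) ∧ θ.Realize (Sum.elim d m) := by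
  let e := Finite.equivFin ν
  have key : ∀ w : Fin (Nat.card ν) → C,
      (θ.relabel (Sum.map (fun i => (⟨d i, hd i⟩ : D)) e)).Realize
        (Sum.elim Subtype.val w) ↔ θ.Realize (Sum.elim d (w ∘ e)) := by
    intro w
    simp only [Formula.realize_relabel, Sum.elim_comp_map]
    rfl
  obtain ⟨m, hm, hmθ⟩ := h _ _ (a ∘ e.symm) (fun i => ha _)
    ((key _).2 (by simpa [Function.comp_assoc] using hθ))
  exact ⟨m ∘ e, fun i => hm _, (key m).1 hmθ⟩

lemma SetFinSat.mono_base {D' : Set C} (hsub : D' ⊆ D) (h : SetFinSat L M D A) :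
    SetFinSat L M D' A :=
  fun _ _ _ ha hφ => h.exists_realize (d := fun x : D' => x.1) (fun x => hsub x.2) ha hφ

lemma SetFinSat.mono_set {A' : Set C} (hsub : A' ⊆ A) (h : SetFinSat L M D A) :
    SetFinSat L M D A' :=
  fun n φ a ha hφ => h n φ a (fun i => hsub (ha i)) hφ

/-- A type finitely satisfied in `M` does not split over `M`. -/
lemma SetFinSat.realize_of_tpSet_eq (h : SetFinSat L M D A) [Finite ν]
    {θ : L.Formula (κ ⊕ ν)} {d d' : κ → C} (hd : ∀ i, d i ∈ D) (hd' : ∀ i, d' i ∈ D)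
    (htp : tpSet (L := L) M d = tpSet (L := L) M d') {a : ν → C} (ha : ∀ i, a i ∈ A)
    (hθ : θ.Realize (Sum.elim d a)) : θ.Realize (Sum.elim d' a) := by
  by_contra hθ'
  let χ : L.Formula ((κ ⊕ κ) ⊕ ν) :=
    θ.relabel (Sum.map Sum.inl id) ⊓ (θ.relabel (Sum.map Sum.inr id)).not
  have key : ∀ w : ν → C, χ.Realize (Sum.elim (Sum.elim d d') w) ↔
      θ.Realize (Sum.elim d w) ∧ ¬ θ.Realize (Sum.elim d' w) := by
    intro w
    simp only [χ, Formula.realize_inf, Formula.realize_not, Formula.realize_relabel,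
      Sum.elim_comp_map, Sum.elim_comp_inl, Sum.elim_comp_inr, Function.comp_id]
  obtain ⟨m, hm, hmχ⟩ := h.exists_realize (d := Sum.elim d d') (Sum.forall.2 ⟨hd, hd'⟩) ha
    ((key a).2 ⟨hθ, hθ'⟩)
  obtain ⟨hmθ, hmθ'⟩ := (key m).1 hmχ
  exact hmθ' (MonadicNIP.realize_of_tpSet_eq (tpSet_sumElim_eq htp hm) hmθ)

end FinSat

section Full

variable {M C0 A B1 B2 : Set C}

lemma exists_realize_of_isFull (hMC : M ⊆ C0) (hfull : IsFull L M C0)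
    (hB : SetFinSat L M (C0 ∪ A) (B1 ∪ B2)) (h2 : SetFinSat L M (C0 ∪ B1) B2)
    {κ ι ν : Type*} [Finite κ] [Finite ι] [Finite ν] {θ : L.Formula ((κ ⊕ ι) ⊕ ν)}
    {d : κ → C} (hd : ∀ i, d i ∈ C0 ∪ A) {b : ι → C} (hb : ∀ i, b i ∈ B1)
    {a : ν → C} (ha : ∀ i, a i ∈ B2) (hθ : θ.Realize (Sum.elim (Sum.elim d b) a)) :
    ∃ m : ν → C, (∀ i, m i ∈ M) ∧ θ.Realize (Sum.elim (Sum.elim d b) m) := by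
  obtain ⟨d', hd', htp⟩ := hfull.exists_tpSet_eq d
  have hθ' : θ.Realize (Sum.elim (Sum.elim d' b) a) := by
    have hassoc : ∀ x : κ → C, (θ.relabel (Equiv.sumAssoc κ ι ν)).Realize
        (Sum.elim x (Sum.elim b a)) ↔ θ.Realize (Sum.elim (Sum.elim x b) a) := by
      intro x
      rw [Formula.realize_relabel]
      exact iff_of_eq (congrArg _ (by funext i; rcases i with (i | i) | i <;> rfl))
    refine (hassoc d').1 (hB.realize_of_tpSet_eq hd (fun i => Or.inl (hd' i)) htp ?_
      ((hassoc d).2 hθ))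
    exact Sum.forall.2 ⟨fun i => Or.inl (hb i), fun i => Or.inr (ha i)⟩
  obtain ⟨m, hm, hmθ⟩ := h2.exists_realize (d := Sum.elim d' b)
    (Sum.forall.2 ⟨fun i => Or.inl (hd' i), fun i => Or.inr (hb i)⟩) ha hθ'
  refine ⟨m, hm, ?_⟩
  let g : (κ ⊕ ι) ⊕ ν → (κ ⊕ ν) ⊕ ι :=
    Sum.elim (Sum.elim (Sum.inl ∘ Sum.inl) Sum.inr) (Sum.inl ∘ Sum.inr)
  have hswap : ∀ x : κ → C, (θ.relabel g).Realize (Sum.elim (Sum.elim x m) b) ↔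
      θ.Realize (Sum.elim (Sum.elim x b) m) := by
    intro x
    rw [Formula.realize_relabel]
    exact iff_of_eq (congrArg _ (by funext i; rcases i with (i | i) | i <;> rfl))
  have hdm : ∀ x : κ → C, (∀ i, x i ∈ C0 ∪ A) → ∀ i, Sum.elim x m i ∈ C0 ∪ A :=
    fun x hx => Sum.forall.2 ⟨hx, fun i => Or.inl (hMC (hm i))⟩
  exact (hswap d).1 ((hB.mono_set subset_union_left).realize_of_tpSet_eq
    (hdm d' fun i => Or.inl (hd' i)) (hdm d hd) (tpSet_sumElim_eq htp.symm hm) hb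
    ((hswap d').2 hmθ))

lemma SetFinSat.union_base_of_isFull (hMC : M ⊆ C0) (hfull : IsFull L M C0)
    (hB : SetFinSat L M (C0 ∪ A) (B1 ∪ B2)) (h2 : SetFinSat L M (C0 ∪ B1) B2) :
    SetFinSat L M (C0 ∪ A ∪ B1) B2 := by
  classical
  intro n φ a ha hφ
  obtain ⟨t, ψ, hψ⟩ := Formula.exists_finset_params (C := C) φ
  let u : t → C := fun x => x.1.1
  let p : t → Prop := fun x => u x ∈ C0 ∪ A
  have hsplit : ∀ w : Fin n → C, φ.Realize (Sum.elim Subtype.val w) ↔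
      (ψ.relabel (Sum.map (Equiv.sumCompl p).symm id)).Realize
        (Sum.elim (Sum.elim (fun x : {x // p x} => u x) fun x : {x // ¬ p x} => u x) w) := by
    intro w
    have hu : Sum.elim (fun x : {x // p x} => u x) (fun x : {x // ¬ p x} => u x) ∘
        (Equiv.sumCompl p).symm = u := by
      funext x; by_cases hx : p x <;> simp [hx]
    rw [hψ, Formula.realize_relabel, Sum.elim_comp_map, hu, Function.comp_id]
    rfl
  have hB1 : ∀ x : {x // ¬ p x}, u x ∈ B1 := fun x => x.1.1.2.resolve_left x.2
  obtain ⟨m, hm, hmθ⟩ := exists_realize_of_isFull hMC hfull hB h2 (fun x => x.2) hB1 ha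
    ((hsplit a).1 hφ)
  exact ⟨m, hm, (hsplit m).2 hmθ⟩

end Full

theorem statement7_general (M : L.ElementarySubstructure C) (C0 : Set C)
    (hMC : (M : Set C) ⊆ C0) (hfull : IsFull L (M : Set C) C0)
    (A B B1 B2 : Set C)
    (hB : SetFinSat L (M : Set C) (C0 ∪ A) B)
    (hunion : B = B1 ∪ B2) :
    (SetFinSat L (M : Set C) (C0 ∪ A) B1 ∧
       SetFinSat L (M : Set C) (C0 ∪ A ∪ B1) B2) ↔
    (SetFinSat L (M : Set C) C0 B1 ∧ SetFinSat L (M : Set C) (C0 ∪ B1) B2) := by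
  subst hunion
  constructor
  · rintro ⟨h1, h2⟩
    exact ⟨h1.mono_base subset_union_left,
      h2.mono_base (union_subset_union_left B1 subset_union_left)⟩
  · rintro ⟨-, h2⟩
    exact ⟨hB.mono_set subset_union_left, hB.union_base_of_isFull hMC hfull h2⟩

/-- Over a full `C0 ⊇ M`, if `⟨A, B⟩` is an `M`-f.s. sequence over `C0`
and `B = B₁ ⊔ B₂`, then `⟨A, B₁, B₂⟩` is an `M`-f.s. sequence over `C0` iff
`⟨B₁, B₂⟩` is an `M`-f.s. sequence over `C0`. -/
theorem statement7 (M : L.ElementarySubstructure C) (C0 : Set C)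
    (hMC : (M : Set C) ⊆ C0) (hfull : IsFull L (M : Set C) C0)
    (A B B1 B2 : Set C)
    (hA : SetFinSat L (M : Set C) C0 A)
    (hB : SetFinSat L (M : Set C) (C0 ∪ A) B)
    (hunion : B = B1 ∪ B2) (hdisj : Disjoint B1 B2) :
    (SetFinSat L (M : Set C) (C0 ∪ A) B1 ∧
       SetFinSat L (M : Set C) (C0 ∪ A ∪ B1) B2) ↔
    (SetFinSat L (M : Set C) C0 B1 ∧ SetFinSat L (M : Set C) (C0 ∪ B1) B2) :=
  statement7_general M C0 hMC hfull A B B1 B2 hB hunion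

end MonadicNIP
end

section
/- Suppose C ⊇ M is full and ⟨A, B⟩ is an M-f.s. sequence over C. If ā₁, ā₂ are tuples from A and b̄₁, b̄₂ are tuples from B with tp(ā₁/C) = tp(ā₂/C) and tp(b̄₁/C) = tp(b̄₂/C), then tp(ā₁b̄₁/C) = tp(ā₂b̄₂/C). -/
open FirstOrder FirstOrder.Language Cardinal Set

universe u v w

namespace MonadicNIP

variable {L : FirstOrder.Language.{u, u}} {C : Type u} [L.Structure C]

/-!
If `tp(B/C₀A)` is finitely satisfied in `M`, then no type over `C₀A` of a tuple from `B`
splits over `M`: parameter tuples with the same type over `M` are interchangeable against it.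
Given `φ(ā₁, b̄₁)` over `C₀`, gather `ā₁` and the finitely many parameters `d̄` of `φ` into
`ē₁ = d̄ā₁`, and use fullness to find `c̄ ⊆ C₀` with `tp(c̄/M) = tp(ē₁/M)`. Then
`φ(ē₁, b̄₁) → φ(c̄, b̄₁) → φ(c̄, b̄₂) → φ(ē₂, b̄₂)`: the outer steps by non-splitting (note
`tp(ē₂/M) = tp(ē₁/M)` because `tp(ā₂/C₀) = tp(ā₁/C₀)`), the middle one because `c̄ ⊆ C₀`.
-/

section TypeTransfer

variable {P : Set C} {ι : Type v} {κ : Type w}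

theorem realize_relabel_sumMap_subtype {e : ι → C} (he : ∀ i, e i ∈ P)
    (θ : L.Formula (ι ⊕ κ)) (x : κ → C) :
    (θ.relabel (Sum.map (fun i => (⟨e i, he i⟩ : P)) id)).Realize
        (Sum.elim (Subtype.val : P → C) x) ↔ θ.Realize (Sum.elim e x) := by
  rw [Formula.realize_relabel, Sum.elim_comp_map]
  rfl

theorem realize_sumElim_iff_of_tpSet_eq {x y : κ → C}
    (h : tpSet (L := L) P x = tpSet (L := L) P y) {e : ι → C} (he : ∀ i, e i ∈ P)
    (θ : L.Formula (ι ⊕ κ)) :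
    θ.Realize (Sum.elim e x) ↔ θ.Realize (Sum.elim e y) := by
  rw [← realize_relabel_sumMap_subtype he, ← realize_relabel_sumMap_subtype he]
  exact Set.ext_iff.mp h _

theorem tpSet_comp_eq_s8 {x y : κ → C} (h : tpSet (L := L) P x = tpSet (L := L) P y)
    (σ : ι → κ) : tpSet (L := L) P (x ∘ σ) = tpSet (L := L) P (y ∘ σ) := by
  ext θ
  have key := realize_sumElim_iff_of_tpSet_eq h (e := Subtype.val) Subtype.prop
    (θ.relabel (Sum.map id σ))
  simp only [Formula.realize_relabel, Sum.elim_comp_map, Function.comp_id] at key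
  exact key

theorem realize_relabel_sumAssoc_symm {α β γ : Type*} (θ : L.Formula (α ⊕ (β ⊕ γ)))
    (f : α → C) (g : β → C) (h : γ → C) :
    (θ.relabel (Equiv.sumAssoc α β γ).symm).Realize (Sum.elim (Sum.elim f g) h) ↔
      θ.Realize (Sum.elim f (Sum.elim g h)) := by
  rw [Formula.realize_relabel]
  congr!
  funext z
  rcases z with _ | _ | _ <;> rfl

theorem tpSet_sumElim_eq_s8 {Q : Set C} {x y : κ → C}
    (h : tpSet (L := L) P x = tpSet (L := L) P y) (hQP : Q ⊆ P) {d : ι → C}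
    (hd : ∀ i, d i ∈ P) :
    tpSet (L := L) Q (Sum.elim d x) = tpSet (L := L) Q (Sum.elim d y) := by
  ext θ
  have hparams : ∀ z, Sum.elim (Subtype.val : Q → C) d z ∈ P := by
    rintro (q | i)
    exacts [hQP q.2, hd i]
  have key := realize_sumElim_iff_of_tpSet_eq h hparams (θ.relabel (Equiv.sumAssoc _ _ _).symm)
  rwa [realize_relabel_sumAssoc_symm, realize_relabel_sumAssoc_symm] at key

end TypeTransfer

theorem exists_finite_params {α : Type v} (P : Set C) (φ : L.Formula (P ⊕ α)) :
    ∃ (n : ℕ) (d : Fin n → C), (∀ i, d i ∈ P) ∧ ∃ ψ : L.Formula (Fin n ⊕ α),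
      ∀ x : α → C, φ.Realize (Sum.elim (Subtype.val : P → C) x) ↔ ψ.Realize (Sum.elim d x) := by
  classical
  let t := φ.freeVarFinset.toLeft
  let σ := t.equivFin
  refine ⟨t.card, fun i => σ.symm i, fun i => (σ.symm i : P).2,
    φ.restrictFreeVar fun v => Sum.casesOn v.1
      (fun p hp => Sum.inl (σ ⟨p, Finset.mem_toLeft.2 hp⟩)) (fun a _ => Sum.inr a) v.2,
    fun x => ?_⟩
  refine (BoundedFormula.realize_restrictFreeVar _ ?_).symm
  rintro ⟨p | a, hv⟩ <;> simp

theorem exists_tpSet_eq_of_isFull {M C0 : Set C} (hfull : IsFull L M C0) {ι : Type v}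
    [Finite ι] (e : ι → C) :
    ∃ c : ι → C, (∀ i, c i ∈ C0) ∧ tpSet (L := L) M e = tpSet (L := L) M c := by
  obtain ⟨n, ⟨σ⟩⟩ := Finite.exists_equiv_fin ι
  obtain ⟨c, hc, hec⟩ := hfull n (e ∘ σ.symm)
  refine ⟨c ∘ σ, fun i => hc (σ i), ?_⟩
  simpa [Function.comp_assoc] using tpSet_comp_eq_s8 hec σ

section NonSplitting

variable {M P B : Set C} {ι : Type v} {l : ℕ}

theorem realize_sumElim_of_setFinSat (hB : SetFinSat L M P B) {b : Fin l → C}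
    (hb : ∀ i, b i ∈ B) {e e' : ι → C} (he : ∀ i, e i ∈ P) (he' : ∀ i, e' i ∈ P)
    (hee' : tpSet (L := L) M e = tpSet (L := L) M e') (ψ : L.Formula (ι ⊕ Fin l))
    (hψ : ψ.Realize (Sum.elim e b)) : ψ.Realize (Sum.elim e' b) := by
  by_contra hψ'
  let χ : L.Formula (P ⊕ Fin l) :=
    ψ.relabel (Sum.map (fun i => ⟨e i, he i⟩) id) ⊓
      (ψ.relabel (Sum.map (fun i => ⟨e' i, he' i⟩) id)).not
  have hχ : χ.Realize (Sum.elim Subtype.val b) := by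
    simp only [χ, Formula.realize_inf, Formula.realize_not, realize_relabel_sumMap_subtype]
    exact ⟨hψ, hψ'⟩
  obtain ⟨m, hm, hχm⟩ := hB l χ b hb hχ
  simp only [χ, Formula.realize_inf, Formula.realize_not, realize_relabel_sumMap_subtype] at hχm
  have hswap := realize_sumElim_iff_of_tpSet_eq hee' hm (ψ.relabel Sum.swap)
  simp only [Formula.realize_relabel, Sum.elim_swap] at hswap
  exact hχm.2 (hswap.1 hχm.1)

theorem realize_sumElim_of_isFull {C0 : Set C} (hfull : IsFull L M C0) (hC0P : C0 ⊆ P)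
    (hB : SetFinSat L M P B) [Finite ι] {e₁ e₂ : ι → C} (he₁ : ∀ i, e₁ i ∈ P)
    (he₂ : ∀ i, e₂ i ∈ P) (he : tpSet (L := L) M e₁ = tpSet (L := L) M e₂)
    {b₁ b₂ : Fin l → C} (hb₁ : ∀ i, b₁ i ∈ B) (hb₂ : ∀ i, b₂ i ∈ B)
    (hb : tpSet (L := L) C0 b₁ = tpSet (L := L) C0 b₂) (ψ : L.Formula (ι ⊕ Fin l))
    (hψ : ψ.Realize (Sum.elim e₁ b₁)) : ψ.Realize (Sum.elim e₂ b₂) := by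
  obtain ⟨c, hc, hec⟩ := exists_tpSet_eq_of_isFull hfull e₁
  have hcP : ∀ i, c i ∈ P := fun i => hC0P (hc i)
  have hψc₁ : ψ.Realize (Sum.elim c b₁) := realize_sumElim_of_setFinSat hB hb₁ he₁ hcP hec ψ hψ
  have hψc₂ : ψ.Realize (Sum.elim c b₂) := (realize_sumElim_iff_of_tpSet_eq hb hc ψ).1 hψc₁
  exact realize_sumElim_of_setFinSat hB hb₂ hcP he₂ (hec.symm.trans he) ψ hψc₂

end NonSplitting

theorem realize_sumElim_of_fsSeq {M C0 A B : Set C} (hMC : M ⊆ C0) (hfull : IsFull L M C0)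
    (hB : SetFinSat L M (C0 ∪ A) B) {k l : ℕ} {a₁ a₂ : Fin k → C} {b₁ b₂ : Fin l → C}
    (ha₁ : ∀ i, a₁ i ∈ A) (ha₂ : ∀ i, a₂ i ∈ A) (hb₁ : ∀ i, b₁ i ∈ B) (hb₂ : ∀ i, b₂ i ∈ B)
    (hta : tpSet (L := L) C0 a₁ = tpSet (L := L) C0 a₂)
    (htb : tpSet (L := L) C0 b₁ = tpSet (L := L) C0 b₂) (φ : L.Formula (C0 ⊕ (Fin k ⊕ Fin l)))
    (hφ : φ.Realize (Sum.elim Subtype.val (Sum.elim a₁ b₁))) :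
    φ.Realize (Sum.elim Subtype.val (Sum.elim a₂ b₂)) := by
  obtain ⟨n, d, hd, ψ, hφψ⟩ := exists_finite_params C0 φ
  have hparams : ∀ {a : Fin k → C}, (∀ i, a i ∈ A) → ∀ z, Sum.elim d a z ∈ C0 ∪ A := by
    rintro a ha (i | i)
    exacts [Or.inl (hd i), Or.inr (ha i)]
  rw [hφψ, ← realize_relabel_sumAssoc_symm] at hφ ⊢
  exact realize_sumElim_of_isFull hfull subset_union_left hB (hparams ha₁) (hparams ha₂)
    (tpSet_sumElim_eq_s8 hta hMC hd) hb₁ hb₂ htb _ hφ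

theorem statement8_general (M : L.ElementarySubstructure C) (C0 : Set C)
    (hMC : (M : Set C) ⊆ C0) (hfull : IsFull L (M : Set C) C0)
    (A B : Set C)
    (hB : SetFinSat L (M : Set C) (C0 ∪ A) B)
    {k l : ℕ} (a1 a2 : Fin k → C) (b1 b2 : Fin l → C)
    (ha1 : ∀ i, a1 i ∈ A) (ha2 : ∀ i, a2 i ∈ A)
    (hb1 : ∀ i, b1 i ∈ B) (hb2 : ∀ i, b2 i ∈ B)
    (hta : tpSet (L := L) C0 a1 = tpSet (L := L) C0 a2)
    (htb : tpSet (L := L) C0 b1 = tpSet (L := L) C0 b2) :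
    tpSet (L := L) C0 (Sum.elim a1 b1) = tpSet (L := L) C0 (Sum.elim a2 b2) :=
  Set.ext fun φ =>
    ⟨realize_sumElim_of_fsSeq hMC hfull hB ha1 ha2 hb1 hb2 hta htb φ,
      realize_sumElim_of_fsSeq hMC hfull hB ha2 ha1 hb2 hb1 hta.symm htb.symm φ⟩

/-- Over a full `C0 ⊇ M`, if `⟨A, B⟩` is an `M`-f.s. sequence over `C0`,
tuples `ā₁, ā₂` from `A` and `b̄₁, b̄₂` from `B` with `tp(ā₁/C0) = tp(ā₂/C0)` and
`tp(b̄₁/C0) = tp(b̄₂/C0)` satisfy `tp(ā₁b̄₁/C0) = tp(ā₂b̄₂/C0)`. -/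
theorem statement8 (M : L.ElementarySubstructure C) (C0 : Set C)
    (hMC : (M : Set C) ⊆ C0) (hfull : IsFull L (M : Set C) C0)
    (A B : Set C)
    (hA : SetFinSat L (M : Set C) C0 A)
    (hB : SetFinSat L (M : Set C) (C0 ∪ A) B)
    {k l : ℕ} (a1 a2 : Fin k → C) (b1 b2 : Fin l → C)
    (ha1 : ∀ i, a1 i ∈ A) (ha2 : ∀ i, a2 i ∈ A)
    (hb1 : ∀ i, b1 i ∈ B) (hb2 : ∀ i, b2 i ∈ B)
    (hta : tpSet (L := L) C0 a1 = tpSet (L := L) C0 a2)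
    (htb : tpSet (L := L) C0 b1 = tpSet (L := L) C0 b2) :
    tpSet (L := L) C0 (Sum.elim a1 b1) = tpSet (L := L) C0 (Sum.elim a2 b2) :=
  statement8_general M C0 hMC hfull A B hB a1 a2 b1 b2 ha1 ha2 hb1 hb2 hta htb

end MonadicNIP
end

section
/- For any full set C ⊇ M, every M-f.s. sequence ⟨A_i : i ∈ I⟩ over C is an order-congruence over C: for all i* ∈ I, all i* ≤ i₁ < ⋯ < i_n and i* ≤ j₁ < ⋯ < j_n from I, and all tuples ā_k ∈ A_{i_k}, b̄_k ∈ A_{j_k} with tp(ā_k/C) = tp(b̄_k/C) for each k, we have tp(ā₁⋯ā_n / C A_{<i*}) = tp(b̄₁⋯b̄_n / C A_{<i*}). -/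
open FirstOrder FirstOrder.Language Cardinal Set

universe u v w

namespace MonadicNIP

variable {L : FirstOrder.Language.{u, u}} {C : Type u} [L.Structure C]

/-! Induct on the number of blocks and peel off the last one; by symmetry the last `a`-block
lies in `A i` and the last `b`-block in `A j` with `i ≤ j`. Write `x`, `y` for the first blocks,
`t`, `t'` for the last ones and `D = C A_{<i*}`. Over `E = D x` both `tp(t/E)` and `tp(t'/E)` are
finitely satisfied in `M`, hence do not split over `M`; as `C` is full, such a type is determined
by its restriction to `C`, so `tp(t/E) = tp(t'/E)` and `tp(x t/D) = tp(x t'/D)`. By induction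
`tp(x/D) = tp(y/D)`, and a formula over `D` separating `x t'` from `y t'` would, by finite
satisfiability of `tp(t'/C A_{<j})`, already separate `x` from `y` with `t'` replaced by a tuple
from `M ⊆ D`. -/

section Types

variable {α β γ δ : Type*}

theorem mem_tpSet_relabel_iff {B B' : Set C} {φ : L.Formula (B ⊕ α)}
    {g : B ⊕ α → B' ⊕ β} {a : α → C} {f : β → C}
    (hg : Sum.elim Subtype.val f ∘ g = Sum.elim Subtype.val a) :
    φ.relabel g ∈ tpSet (L := L) B' f ↔ φ ∈ tpSet (L := L) B a := by
  simp only [tpSet, Set.mem_ofPred_eq, Formula.realize_relabel, hg]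

theorem mem_tpSet_relabel_params {B : Set C} {k : ℕ} (ψ : L.Formula (Fin k ⊕ α))
    (b : Fin k → B) (a : α → C) :
    ψ.relabel (Sum.elim (fun i => Sum.inl (b i)) Sum.inr) ∈ tpSet (L := L) B a ↔
      ψ.Realize (Sum.elim (fun i => (b i : C)) a) := by
  simp only [tpSet, Set.mem_ofPred_eq, Formula.realize_relabel, Sum.comp_elim]
  rfl

theorem tpSet_comp_eq_comp {B : Set C} {a b : α → C}
    (h : tpSet (L := L) B a = tpSet (L := L) B b) (g : γ → α) :
    tpSet (L := L) B (a ∘ g) = tpSet (L := L) B (b ∘ g) := by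
  ext φ
  have key : ∀ f : α → C, φ.relabel (Sum.map id g) ∈ tpSet (L := L) B f ↔
      φ ∈ tpSet (L := L) B (f ∘ g) :=
    fun f => mem_tpSet_relabel_iff (funext fun z => by rcases z with z | z <;> rfl)
  rw [← key a, ← key b, h]

theorem Formula.exists_fin_params (φ : L.Formula (β ⊕ α)) :
    ∃ (k : ℕ) (e : Fin k → β) (ψ : L.Formula (Fin k ⊕ α)), ∀ v : β ⊕ α → C,
      φ.Realize v ↔ (ψ.relabel (Sum.elim (fun i => Sum.inl (e i)) Sum.inr)).Realize v := by
  classical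
  let s : Finset β := φ.freeVarFinset.toLeft
  let f : φ.freeVarFinset → Fin s.card ⊕ α := fun z =>
    match z with
    | ⟨Sum.inl b, hb⟩ => Sum.inl (s.equivFin ⟨b, Finset.mem_toLeft.2 hb⟩)
    | ⟨Sum.inr a, _⟩ => Sum.inr a
  refine ⟨s.card, fun i => s.equivFin.symm i, φ.restrictFreeVar f, fun v => ?_⟩
  rw [Formula.realize_relabel]
  refine (BoundedFormula.realize_restrictFreeVar v fun z => ?_).symm
  obtain ⟨z | z, hz⟩ := z <;> simp [f]

variable {M B : Set C}

/-- A formula separating `u` from `v` at `t` lies in `tp(t/B)`, so it is realized in `M`. -/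
theorem FinSat.realize_iff_of_forall_mem {t : γ → C} (ht : FinSat M (tpSet (L := L) B t))
    (ψ : L.Formula (δ ⊕ γ)) {u v : δ → C} (hu : ∀ i, u i ∈ B) (hv : ∀ i, v i ∈ B)
    (huv : ∀ m : γ → C, (∀ i, m i ∈ M) →
      (ψ.Realize (Sum.elim u m) ↔ ψ.Realize (Sum.elim v m))) :
    ψ.Realize (Sum.elim u t) ↔ ψ.Realize (Sum.elim v t) := by
  let θ : L.Formula (B ⊕ γ) :=
    ((ψ.relabel (Sum.map (fun i => ⟨u i, hu i⟩) id)).iff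
      (ψ.relabel (Sum.map (fun i => ⟨v i, hv i⟩) id))).not
  have hθ : ∀ w : γ → C, θ.Realize (Sum.elim Subtype.val w) ↔
      ¬(ψ.Realize (Sum.elim u w) ↔ ψ.Realize (Sum.elim v w)) := by
    intro w
    simp only [θ, Formula.realize_not, Formula.realize_iff, Formula.realize_relabel,
      Sum.elim_comp_map]
    rfl
  by_contra h
  obtain ⟨m, hm, hmθ⟩ := ht θ ((hθ t).2 h)
  exact (hθ m).1 hmθ (huv m hm)

theorem FinSat.notSplitOver {t : γ → C} (ht : FinSat M (tpSet (L := L) B t)) :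
    NotSplitOver (L := L) M (tpSet (L := L) B t) := by
  intro k b b' ψ hbb'
  rw [mem_tpSet_relabel_params, mem_tpSet_relabel_params]
  refine ht.realize_iff_of_forall_mem ψ (fun i => (b i).2) (fun i => (b' i).2) fun m hm => ?_
  have := Set.ext_iff.1 hbb'
    (ψ.relabel (Sum.elim Sum.inr fun j => Sum.inl ⟨m j, hm j⟩))
  simp only [tpSet, Set.mem_ofPred_eq, Formula.realize_relabel, Sum.comp_elim] at this
  exact this

theorem FinSat.tpSet_of_subset {B' : Set C} {a : α → C} (h : FinSat M (tpSet (L := L) B a))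
    (hB : B' ⊆ B) : FinSat M (tpSet (L := L) B' a) := by
  intro φ hφ
  have key : ∀ f : α → C, φ.relabel (Sum.map (Set.inclusion hB) id) ∈ tpSet (L := L) B f ↔
      φ ∈ tpSet (L := L) B' f :=
    fun f => mem_tpSet_relabel_iff (funext fun z => by rcases z with z | z <;> rfl)
  obtain ⟨m, hm, hmφ⟩ := h _ ((key a).2 hφ)
  exact ⟨m, hm, (key m).1 hmφ⟩

theorem SetFinSat.finSat_tpSet {A : Set C} (h : SetFinSat L M B A) [Finite α] {a : α → C}
    (ha : ∀ i, a i ∈ A) : FinSat M (tpSet (L := L) B a) := by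
  obtain ⟨n, ⟨e⟩⟩ := Finite.exists_equiv_fin α
  intro φ hφ
  have key : ∀ f : α → C, φ.relabel (Sum.map id e) ∈ tpSet (L := L) B (f ∘ e.symm) ↔
      φ ∈ tpSet (L := L) B f :=
    fun f => mem_tpSet_relabel_iff (funext fun z => by rcases z with z | z <;> simp)
  obtain ⟨m, hm, hmφ⟩ := h n _ (a ∘ e.symm) (fun i => ha _) ((key a).2 hφ)
  refine ⟨m ∘ e, fun i => hm _, (key _).1 ?_⟩
  rwa [Function.comp_assoc, e.self_comp_symm, Function.comp_id]

/-- Fullness moves the parameters of a formula into `C0` without changing their type over `M`. -/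
theorem tpSet_eq_of_notSplitOver {C0 E : Set C} (hC0E : C0 ⊆ E) (hfull : IsFull L M C0)
    {x y : α → C} (hx : NotSplitOver (L := L) M (tpSet (L := L) E x))
    (hy : NotSplitOver (L := L) M (tpSet (L := L) E y))
    (hxy : tpSet (L := L) C0 x = tpSet (L := L) C0 y) :
    tpSet (L := L) E x = tpSet (L := L) E y := by
  ext φ
  obtain ⟨k, e, ψ, hψ⟩ := Formula.exists_fin_params (C := C) φ
  obtain ⟨c, hc, hec⟩ := hfull k fun i => e i
  let c₀ : Fin k → C0 := fun i => ⟨c i, hc i⟩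
  let c₁ : Fin k → E := fun i => ⟨c i, hC0E (hc i)⟩
  have hC0 := Set.ext_iff.1 hxy (ψ.relabel (Sum.elim (fun i => Sum.inl (c₀ i)) Sum.inr))
  calc φ ∈ tpSet E x
      ↔ ψ.relabel (Sum.elim (fun i => Sum.inl (e i)) Sum.inr) ∈ tpSet E x := hψ _
    _ ↔ ψ.relabel (Sum.elim (fun i => Sum.inl (c₁ i)) Sum.inr) ∈ tpSet E x :=
      hx k e c₁ ψ hec
    _ ↔ ψ.relabel (Sum.elim (fun i => Sum.inl (c₁ i)) Sum.inr) ∈ tpSet E y := by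
      simpa only [mem_tpSet_relabel_params] using hC0
    _ ↔ ψ.relabel (Sum.elim (fun i => Sum.inl (e i)) Sum.inr) ∈ tpSet E y :=
      (hy k e c₁ ψ hec).symm
    _ ↔ φ ∈ tpSet E y := (hψ _).symm

theorem tpSet_sumElim_eq_of_subset {B' : Set C} (hB : B ⊆ B') {x : β → C}
    (hx : ∀ i, x i ∈ B') {t t' : γ → C} (h : tpSet (L := L) B' t = tpSet (L := L) B' t') :
    tpSet (L := L) B (Sum.elim x t) = tpSet (L := L) B (Sum.elim x t') := by
  ext φ
  have key : ∀ f : γ → C, φ.relabel (Sum.elim (fun b => Sum.inl (Set.inclusion hB b))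
      (Sum.elim (fun i => Sum.inl ⟨x i, hx i⟩) Sum.inr)) ∈ tpSet (L := L) B' f ↔
        φ ∈ tpSet (L := L) B (Sum.elim x f) :=
    fun f => mem_tpSet_relabel_iff (funext fun z => by rcases z with z | z | z <;> rfl)
  rw [← key t, ← key t', h]

theorem tpSet_sumElim_eq_of_finSat {B' : Set C} (hMB : M ⊆ B) (hB : B ⊆ B') {x y : β → C}
    (hx : ∀ i, x i ∈ B') (hy : ∀ i, y i ∈ B')
    (hxy : tpSet (L := L) B x = tpSet (L := L) B y)
    {t : γ → C} (ht : FinSat M (tpSet (L := L) B' t)) :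
    tpSet (L := L) B (Sum.elim x t) = tpSet (L := L) B (Sum.elim y t) := by
  ext φ
  have reassoc : ∀ z : β → C,
      (φ.relabel (Equiv.sumAssoc B β γ).symm).Realize (Sum.elim (Sum.elim Subtype.val z) t) ↔
        φ ∈ tpSet (L := L) B (Sum.elim z t) := fun z => by
    rw [Formula.realize_relabel]
    exact iff_of_eq (congrArg _ (funext fun z => by rcases z with z | z | z <;> rfl))
  rw [← reassoc x, ← reassoc y]
  refine ht.realize_iff_of_forall_mem _ (Sum.forall.2 ⟨fun b => hB b.2, hx⟩)
    (Sum.forall.2 ⟨fun b => hB b.2, hy⟩) fun m hm => ?_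
  have := Set.ext_iff.1 hxy
    ((φ.relabel (Equiv.sumAssoc B β γ).symm).relabel
      (Sum.elim id fun j => Sum.inl ⟨m j, hMB (hm j)⟩))
  simp only [tpSet, Set.mem_ofPred_eq, Formula.realize_relabel, Sum.comp_elim] at this ⊢
  exact this

theorem tpSet_sumElim_eq_s10 {C0 D : Set C} (hMC : M ⊆ C0) (hC0D : C0 ⊆ D) (hfull : IsFull L M C0)
    {x y : β → C} {t t' : γ → C} (hxy : tpSet (L := L) D x = tpSet (L := L) D y)
    (htt' : tpSet (L := L) C0 t = tpSet (L := L) C0 t')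
    (ht : FinSat M (tpSet (L := L) (D ∪ range x) t))
    (ht' : FinSat M (tpSet (L := L) (D ∪ range x ∪ range y) t')) :
    tpSet (L := L) D (Sum.elim x t) = tpSet (L := L) D (Sum.elim y t') := by
  have hE : tpSet (L := L) (D ∪ range x) t = tpSet (L := L) (D ∪ range x) t' :=
    tpSet_eq_of_notSplitOver (hC0D.trans subset_union_left) hfull ht.notSplitOver
      (ht'.tpSet_of_subset subset_union_left).notSplitOver htt'
  calc tpSet (L := L) D (Sum.elim x t) = tpSet (L := L) D (Sum.elim x t') :=
        tpSet_sumElim_eq_of_subset subset_union_left (fun i => Or.inr (mem_range_self i)) hE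
    _ = tpSet (L := L) D (Sum.elim y t') :=
        tpSet_sumElim_eq_of_finSat (hMC.trans hC0D) (subset_union_left.trans subset_union_left)
          (fun i => Or.inl (Or.inr (mem_range_self i))) (fun i => Or.inr (mem_range_self i)) hxy ht'

end Types

section Blocks

variable {n : ℕ}

def sigmaSplitLast (β : Fin (n + 1) → Type*) :
    (Σ k, β k) → (Σ k : Fin n, β k.castSucc) ⊕ β (Fin.last n)
  | ⟨k, t⟩ =>
    Fin.lastCases (motive := fun k => β k → _) Sum.inr (fun k t => Sum.inl ⟨k, t⟩) k t

theorem sigma_uncurry_eq_comp_sigmaSplitLast {β : Fin (n + 1) → Type*} {γ : Type*}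
    (a : (k : Fin (n + 1)) → β k → γ) :
    Sigma.uncurry a =
      Sum.elim (Sigma.uncurry fun k : Fin n => a k.castSucc) (a (Fin.last n)) ∘
        sigmaSplitLast β := by
  funext ⟨k, t⟩
  induction k using Fin.lastCases <;> simp [sigmaSplitLast, Sigma.uncurry]

variable {I : Type*} [LinearOrder I]

theorem union_biUnion_lt_subset (C0 : Set C) (A : I → Set C) {i i' : I} (h : i ≤ i') :
    C0 ∪ ⋃ j < i, A j ⊆ C0 ∪ ⋃ j < i', A j :=
  union_subset_union_right _ (iUnion₂_mono' fun j hj => ⟨j, hj.trans_le h, subset_rfl⟩)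

theorem range_sigma_uncurry_subset {β : Fin n → Type*} {A : I → Set C} {idx : Fin n → I}
    {a : (k : Fin n) → β k → C} (ha : ∀ k t, a k t ∈ A (idx k)) {i : I}
    (hlt : ∀ k, idx k < i) : range (Sigma.uncurry a) ⊆ ⋃ j < i, A j := by
  rintro _ ⟨⟨k, t⟩, rfl⟩
  exact mem_iUnion₂.2 ⟨idx k, hlt k, ha k t⟩

theorem tpSet_sigma_uncurry_eq {M C0 : Set C} (hMC : M ⊆ C0) (hfull : IsFull L M C0)
    {A : I → Set C} (hfs : IsFSSeq L M C0 A) (istar : I) {β : Fin n → Type*}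
    [∀ k, Finite (β k)] {idx jdx : Fin n → I} (hi : StrictMono idx) (hj : StrictMono jdx)
    (hii : ∀ k, istar ≤ idx k) (hjj : ∀ k, istar ≤ jdx k) {a b : (k : Fin n) → β k → C}
    (ha : ∀ k t, a k t ∈ A (idx k)) (hb : ∀ k t, b k t ∈ A (jdx k))
    (htp : ∀ k, tpSet (L := L) C0 (a k) = tpSet (L := L) C0 (b k)) :
    tpSet (L := L) (C0 ∪ ⋃ j < istar, A j) (Sigma.uncurry a) =
      tpSet (L := L) (C0 ∪ ⋃ j < istar, A j) (Sigma.uncurry b) := by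
  induction n with
  | zero => exact congrArg _ (funext fun p => p.1.elim0)
  | succ n ih =>
    wlog hle : idx (Fin.last n) ≤ jdx (Fin.last n) generalizing idx jdx a b
    · exact (this hj hi hjj hii hb ha (fun k => (htp k).symm) (le_of_not_ge hle)).symm
    have hlast_i : ∀ k : Fin n, idx k.castSucc < idx (Fin.last n) :=
      fun k => hi (Fin.castSucc_lt_last k)
    have hlast_j : ∀ k : Fin n, jdx k.castSucc < jdx (Fin.last n) :=
      fun k => hj (Fin.castSucc_lt_last k)
    rw [sigma_uncurry_eq_comp_sigmaSplitLast a, sigma_uncurry_eq_comp_sigmaSplitLast b]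
    refine tpSet_comp_eq_comp (tpSet_sumElim_eq_s10 hMC subset_union_left hfull
      (ih (hi.comp Fin.strictMono_castSucc) (hj.comp Fin.strictMono_castSucc)
        (fun k => hii _) (fun k => hjj _) (fun k => ha _) (fun k => hb _) (fun k => htp _))
      (htp _) ?_ ?_) _
    · refine ((hfs _).finSat_tpSet (ha _)).tpSet_of_subset (union_subset
        (union_biUnion_lt_subset _ _ (hii _)) ?_)
      exact (range_sigma_uncurry_subset (fun k => ha _) hlast_i).trans subset_union_right
    · refine ((hfs _).finSat_tpSet (hb _)).tpSet_of_subset (union_subset (union_subset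
        (union_biUnion_lt_subset _ _ (hjj _)) ?_) ?_)
      · exact (range_sigma_uncurry_subset (fun k => ha _)
          fun k => (hlast_i k).trans_le hle).trans subset_union_right
      · exact (range_sigma_uncurry_subset (fun k => hb _) hlast_j).trans subset_union_right

end Blocks

/-- Every `M`-f.s. sequence over a full `C0 ⊇ M` is an order-congruence
over `C0`. -/
theorem statement10 (M : L.ElementarySubstructure C) (C0 : Set C)
    (hMC : (M : Set C) ⊆ C0) (hfull : IsFull L (M : Set C) C0)
    {I : Type v} [LinearOrder I] (A : I → Set C)
    (hfs : IsFSSeq L (M : Set C) C0 A)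
    (istar : I) (n : ℕ) (idx jdx : Fin n → I)
    (hi : StrictMono idx) (hj : StrictMono jdx)
    (hii : ∀ k, istar ≤ idx k) (hjj : ∀ k, istar ≤ jdx k)
    (m : Fin n → ℕ) (a b : (k : Fin n) → Fin (m k) → C)
    (ha : ∀ k t, a k t ∈ A (idx k)) (hb : ∀ k t, b k t ∈ A (jdx k))
    (htp : ∀ k, tpSet (L := L) C0 (a k) = tpSet (L := L) C0 (b k)) :
    tpSet (L := L) (C0 ∪ ⋃ j < istar, A j)
        (fun p : Σ k : Fin n, Fin (m k) => a p.1 p.2) =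
      tpSet (L := L) (C0 ∪ ⋃ j < istar, A j)
        (fun p : Σ k : Fin n, Fin (m k) => b p.1 p.2) :=
  tpSet_sigma_uncurry_eq hMC hfull hfs istar hi hj hii hjj ha hb htp

end MonadicNIP
end

section
/- Assume the theory T has the f.s. dichotomy. Then for every elementary substructure M, finite tuples ā, b̄, and singleton c: tp(ā/Mb̄) is finitely satisfiable in M if and only if tp(a/Mb̄) is finitely satisfied in M for every coordinate a of ā. -/
open FirstOrder FirstOrder.Language Cardinal Set

universe u v w

namespace MonadicNIP

variable {L : FirstOrder.Language.{u, u}} {C : Type u} [L.Structure C]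

/-- The theory of `C` has the f.s. dichotomy: for every model `M ⪯ C`, finite tuples
`ā`, `b̄` with `tp(b̄/Mā)` finitely satisfied in `M`, and singleton `c`, either
`tp(b̄/Māc)` or `tp(b̄c/Mā)` is finitely satisfied in `M`. -/
def FSDichotomy (L : FirstOrder.Language.{u, u}) (C : Type u) [L.Structure C] : Prop :=
  ∀ (M : L.ElementarySubstructure C) (k l : ℕ) (a : Fin k → C) (b : Fin l → C) (c : C),
    FinSat (M : Set C) (tpSet (L := L) ((M : Set C) ∪ Set.range a) b) →
    (FinSat (M : Set C) (tpSet (L := L) ((M : Set C) ∪ Set.range a ∪ {c}) b) ∨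
      FinSat (M : Set C) (tpSet (L := L) ((M : Set C) ∪ Set.range a) (Fin.snoc b c)))

theorem statement15_aux (h : FSDichotomy L C) (M : L.ElementarySubstructure C)
    (l : ℕ) (b : Fin l → C) :
    ∀ (k : ℕ) (a : Fin k → C),
      (∀ i : Fin k, FinSat (M : Set C)
        (tpSet (L := L) ((M : Set C) ∪ Set.range b) (fun _ : Fin 1 => a i))) →
      FinSat (M : Set C) (tpSet (L := L) ((M : Set C) ∪ Set.range b) a) := by
  intro k
  induction k with
  | zero =>
    intro a _ φ hφ
    exact ⟨a, fun i => i.elim0, hφ⟩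
  | succ k ih =>
    intro a ha
    set B : Set C := (M : Set C) ∪ Set.range b with hB
    set a' : Fin k → C := Fin.init a with ha'
    set c : C := a (Fin.last k) with hc
    have hfs' : FinSat (M : Set C) (tpSet (L := L) B a') :=
      ih a' (fun i => ha i.castSucc)
    have hsnoc : Fin.snoc a' c = a := Fin.snoc_init_self a
    rcases h M l k b a' c hfs' with H1 | H2
    · -- tp(a'/Bc) finitely satisfiable; combine with tp(c/B) fin sat.
      have hcB' : c ∈ B ∪ {c} := Set.mem_union_right _ rfl
      intro φ hφ
      have hφ' : φ.Realize (Sum.elim (Subtype.val : B → C) a) := hφ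
      -- relabel φ to a formula over B ∪ {c} with k variables
      set g : B ⊕ Fin (k + 1) → ↥(B ∪ {c}) ⊕ Fin k :=
        Sum.elim (fun x => Sum.inl ⟨(x : C), Set.mem_union_left _ x.2⟩)
          (Fin.lastCases (Sum.inl ⟨c, hcB'⟩) (fun j => Sum.inr j)) with hg
      have hmem1 : (φ.relabel g) ∈ tpSet (L := L) (B ∪ {c}) a' := by
        show (φ.relabel g).Realize _
        rw [Formula.realize_relabel]
        have : (Sum.elim (Subtype.val : ↥(B ∪ {c}) → C) a') ∘ g =
            Sum.elim (Subtype.val : B → C) a := by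
          funext x
          rcases x with x | i
          · rfl
          · induction i using Fin.lastCases with
            | last => simp [hg, hc]
            | cast j => simp [hg, ha', Fin.init]
        rw [this]
        exact hφ'
      obtain ⟨mbar, hmbar, hmr⟩ := H1 _ hmem1
      rw [Formula.realize_relabel] at hmr
      -- relabel φ to a formula over B with one variable, using mbar as parameters
      set g2 : B ⊕ Fin (k + 1) → B ⊕ Fin 1 :=
        Sum.elim Sum.inl
          (Fin.lastCases (Sum.inr 0)
            (fun j => Sum.inl ⟨mbar j, Set.mem_union_left _ (hmbar j)⟩)) with hg2
      have hmem2 : (φ.relabel g2) ∈ tpSet (L := L) B (fun _ : Fin 1 => c) := by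
        show (φ.relabel g2).Realize _
        rw [Formula.realize_relabel]
        have : (Sum.elim (Subtype.val : B → C) (fun _ : Fin 1 => c)) ∘ g2 =
            (Sum.elim (Subtype.val : ↥(B ∪ {c}) → C) mbar) ∘ g := by
          funext x
          rcases x with x | i
          · rfl
          · induction i using Fin.lastCases with
            | last => simp [hg, hg2]
            | cast j => simp [hg, hg2]
        rw [this]
        exact hmr
      obtain ⟨m, hm, hmr2⟩ := ha (Fin.last k) _ hmem2
      rw [Formula.realize_relabel] at hmr2
      refine ⟨Fin.snoc mbar (m 0), ?_, ?_⟩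
      · intro i
        induction i using Fin.lastCases with
        | last => simpa using hm 0
        | cast j => simpa using hmbar j
      · have : Sum.elim (Subtype.val : B → C) (Fin.snoc mbar (m 0)) =
            (Sum.elim (Subtype.val : B → C) m) ∘ g2 := by
          funext x
          rcases x with x | i
          · rfl
          · induction i using Fin.lastCases with
            | last => simp [hg2]
            | cast j => simp [hg2]
        rw [this]
        exact hmr2
    · rwa [hsnoc] at H2

/-- If `T` has the f.s. dichotomy, then `tp(ā/Mb̄)` is finitely
satisfiable in `M` iff `tp(a/Mb̄)` is finitely satisfied in `M` for every
coordinate `a` of `ā`. -/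
theorem statement15 (h : FSDichotomy L C) (M : L.ElementarySubstructure C)
    (k l : ℕ) (a : Fin k → C) (b : Fin l → C) :
    FinSat (M : Set C) (tpSet (L := L) ((M : Set C) ∪ Set.range b) a) ↔
      ∀ i : Fin k, FinSat (M : Set C)
        (tpSet (L := L) ((M : Set C) ∪ Set.range b) (fun _ : Fin 1 => a i)) := by
  constructor
  · intro hfs i φ hφ
    have hφ' : φ.Realize
        (Sum.elim (Subtype.val : ((M : Set C) ∪ Set.range b : Set C) → C)
          (fun _ : Fin 1 => a i)) := hφ
    set g : ((M : Set C) ∪ Set.range b : Set C) ⊕ Fin 1 →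
        ((M : Set C) ∪ Set.range b : Set C) ⊕ Fin k :=
      Sum.map id (fun _ : Fin 1 => i) with hg
    have hmem : (φ.relabel g) ∈
        tpSet (L := L) ((M : Set C) ∪ Set.range b) a := by
      show (φ.relabel g).Realize _
      rw [Formula.realize_relabel]
      have : (Sum.elim (Subtype.val : ((M : Set C) ∪ Set.range b : Set C) → C) a) ∘ g =
          Sum.elim (Subtype.val : ((M : Set C) ∪ Set.range b : Set C) → C)
            (fun _ : Fin 1 => a i) := by
        funext x
        rcases x with x | j
        · rfl
        · rfl
      rw [this]
      exact hφ'
    obtain ⟨m, hm, hmr⟩ := hfs _ hmem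
    rw [Formula.realize_relabel] at hmr
    refine ⟨fun _ => m i, fun _ => hm i, ?_⟩
    have : Sum.elim (Subtype.val : ((M : Set C) ∪ Set.range b : Set C) → C)
        (fun _ : Fin 1 => m i) =
        (Sum.elim (Subtype.val : ((M : Set C) ∪ Set.range b : Set C) → C) m) ∘ g := by
      funext x
      rcases x with x | j
      · rfl
      · rfl
    rw [this]
    exact hmr
  · exact statement15_aux h M l b k a

end MonadicNIP
end

section
/- Assume T has the f.s. dichotomy. If tp(ā/Mc) and tp(c/Mb̄) are not finitely satisfiable in M (c a singleton), then tp(ā/Mb̄) is not finitely satisfiable in M. -/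
open FirstOrder FirstOrder.Language Cardinal Set

universe u v w

namespace MonadicNIP

variable {L : FirstOrder.Language.{u, u}} {C : Type u} [L.Structure C]

theorem FinSat.tpSet_comp_of_subset {M B B' : Set C} {α : Type v} {β : Type w}
    {a : α → C} (hB : B ⊆ B') (f : β → α) (h : FinSat (L := L) M (tpSet (L := L) B' a)) :
    FinSat (L := L) M (tpSet (L := L) B (a ∘ f)) := by
  have realize_relabel (φ : L.Formula (B ⊕ β)) (v : α → C) :
      (φ.relabel (Sum.map (Set.inclusion hB) f)).Realize (Sum.elim Subtype.val v) ↔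
        φ.Realize (Sum.elim Subtype.val (v ∘ f)) := by
    rw [Formula.realize_relabel]
    exact iff_of_eq (congrArg φ.Realize (funext (Sum.rec (fun _ => rfl) (fun _ => rfl))))
  intro φ hφ
  obtain ⟨m, hmM, hm⟩ := h _ ((realize_relabel φ a).2 hφ)
  exact ⟨m ∘ f, fun i => hmM (f i), (realize_relabel φ m).1 hm⟩

/-- If `T` has the f.s. dichotomy and `tp(ā/Mc)`, `tp(c/Mb̄)` are not
finitely satisfiable in `M` (`c` a singleton), then neither is `tp(ā/Mb̄)`. -/
theorem statement16 (h : FSDichotomy L C) (M : L.ElementarySubstructure C)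
    (k l : ℕ) (a : Fin k → C) (b : Fin l → C) (c : C)
    (h1 : ¬ FinSat (M : Set C) (tpSet (L := L) ((M : Set C) ∪ {c}) a))
    (h2 : ¬ FinSat (M : Set C)
        (tpSet (L := L) ((M : Set C) ∪ Set.range b) (fun _ : Fin 1 => c))) :
    ¬ FinSat (M : Set C) (tpSet (L := L) ((M : Set C) ∪ Set.range b) a) := by
  intro hab
  rcases h M l k b a c hab with ha_bc | hac_b
  · exact h1 (ha_bc.tpSet_comp_of_subset (union_subset_union_left _ subset_union_left) id)
  · have hc_b := hac_b.tpSet_comp_of_subset subset_rfl (fun _ : Fin 1 => Fin.last k)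
    simp only [Function.comp_def, Fin.snoc_last] at hc_b
    exact h2 hc_b

end MonadicNIP
end

section
/- Let N ⊇ A be a model and N⁺ = (N, U₁, …, U_k) an expansion of N by finitely many unary predicates. Then rtp(N⁺, A) ≤ ℶ_{ω+1}(rtp(N, A)), where rtp counts the number of complete types over A realized by finite tuples from N \ A (in the respective languages). -/
/-!
The type of a tuple `a` in the expansion `N⁺` is determined by a hierarchy of
Ehrenfeucht–Fraïssé invariants computed in `N`. At level `0` one records the `L`-type of `a`
over `A` together with the `L`-types of all one-point extensions `a c` with `c ∉ A` and the
colours `{i | c ∈ U i}` of those `c`: this decides the atomic formulas of `N⁺`, because the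
value of a term at `a` is either a parameter or such a `c`, and which one it is, is read off
from the `L`-types. Level `d + 1` records the level-`d` invariants of `a` and of all its
one-point extensions outside `A`; it decides one more quantifier, since a witness inside `A`
can be substituted as a parameter. If `κ = rtp(N, A)`, level `0` takes at most `κ · 2^(κ · 2^k)`
values and level `d + 1` at most `ρ · 2^ρ`, where `ρ` bounds level `d`; so every level has
fewer than `ℶ_ω(κ)` values, a strong limit, and the number of types in `N⁺` is at most
`ℶ_ω(κ)^ℵ₀ = ℶ_{ω+1}(κ)`.
-/

open FirstOrder FirstOrder.Language Cardinal Set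

universe u v w

namespace MonadicNIP

variable {L : FirstOrder.Language.{u, u}} {C : Type u} [L.Structure C]

/-- Quantifier depth of a bounded formula. -/
def qDepth {α : Type v} : ∀ {n : ℕ}, L.BoundedFormula α n → ℕ
  | _, BoundedFormula.falsum => 0
  | _, BoundedFormula.equal _ _ => 0
  | _, BoundedFormula.rel _ _ => 0
  | _, BoundedFormula.imp f g => max (qDepth f) (qDepth g)
  | _, BoundedFormula.all f => qDepth f + 1

/-- `rtp L N A`: the number of complete types over `A` realized by finite tuples
from `N ∖ A`. -/
noncomputable def rtp (L : FirstOrder.Language.{u, u}) (N : Type u) [L.Structure N]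
    (A : Set N) : Cardinal.{u} :=
  Cardinal.mk ↥(Set.range (fun p : Σ n : ℕ, {a : Fin n → N // ∀ i, a i ∉ A} =>
    (⟨p.1, tpSet (L := L) A p.2.1⟩ : Σ n : ℕ, Set (L.Formula (A ⊕ Fin n)))))

/-- `rK L N A k`: the number of `∼ₖ`-classes of finite tuples from `N ∖ A`, where
tuples are `∼ₖ`-equivalent when they satisfy the same formulas over `A` of
quantifier depth at most `k`. -/
noncomputable def rK (L : FirstOrder.Language.{u, u}) (N : Type u) [L.Structure N]
    (A : Set N) (k : ℕ) : Cardinal.{u} :=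
  Cardinal.mk ↥(Set.range (fun p : Σ n : ℕ, {a : Fin n → N // ∀ i, a i ∉ A} =>
    (⟨p.1, {φ : L.Formula (A ⊕ Fin p.1) | qDepth φ ≤ k ∧
        Formula.Realize φ (Sum.elim (Subtype.val : A → N) p.2.1)}⟩ :
      Σ n : ℕ, Set (L.Formula (A ⊕ Fin n)))))

/-- Iterated power sets: `iterPow κ n = ℶ_n(κ)` relative to `κ`. -/
def iterPow (κ : Cardinal.{u}) : ℕ → Cardinal.{u}
  | 0 => κ
  | n + 1 => 2 ^ iterPow κ n

/-- `ℶ_{ω+1}(κ)`, the `(ω+1)`-st beth number relative to `κ`. -/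
noncomputable def bethOmega1 (κ : Cardinal.{u}) : Cardinal.{u} :=
  2 ^ ⨆ n : ℕ, iterPow κ n

/-- The language consisting of `k` unary relation symbols. -/
def unaryLang (k : ℕ) : FirstOrder.Language.{0, 0} :=
  ⟨fun _ => Empty, fun n => match n with | 1 => Fin k | _ => Empty⟩

/-- The structure on `N` interpreting the `k` unary predicates as the sets `U i`. -/
def unaryStructure {N : Type u} (k : ℕ) (U : Fin k → Set N) :
    (unaryLang k).Structure N where
  funMap := fun f _ => f.elim
  RelMap := fun {n} r x => match n, r with
    | 1, i => x 0 ∈ U i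


section Formulas

variable {M : Type u} [L.Structure M] {α : Type v} {β : Type w}

theorem qDepth_castLE : ∀ {m n : ℕ} (h : m ≤ n) (φ : L.BoundedFormula α m),
    qDepth (φ.castLE h) = qDepth φ
  | _, _, _, .falsum | _, _, _, .equal _ _ | _, _, _, .rel _ _ => rfl
  | _, _, h, .imp f g => by
    simp [BoundedFormula.castLE, qDepth, qDepth_castLE h f, qDepth_castLE h g]
  | _, _, h, .all f => by simp [BoundedFormula.castLE, qDepth, qDepth_castLE _ f]

theorem qDepth_mapTermRel {L' : FirstOrder.Language.{u, u}} {g : ℕ → ℕ}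
    (ft : ∀ n, L.Term (α ⊕ Fin n) → L'.Term (β ⊕ Fin (g n)))
    (fr : ∀ n, L.Relations n → L'.Relations n)
    (h : ∀ n, L'.BoundedFormula β (g (n + 1)) → L'.BoundedFormula β (g n + 1))
    (hh : ∀ n ψ, qDepth (h n ψ) = qDepth ψ) :
    ∀ {n : ℕ} (φ : L.BoundedFormula α n), qDepth (φ.mapTermRel ft fr h) = qDepth φ
  | _, .falsum | _, .equal _ _ | _, .rel _ _ => rfl
  | _, .imp f g => by
    simp [BoundedFormula.mapTermRel, qDepth, qDepth_mapTermRel ft fr h hh f,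
      qDepth_mapTermRel ft fr h hh g]
  | _, .all f => by simp [BoundedFormula.mapTermRel, qDepth, hh, qDepth_mapTermRel ft fr h hh f]

theorem qDepth_relabel {m : ℕ} (g : α → β ⊕ Fin m) {l : ℕ} (φ : L.BoundedFormula α l) :
    qDepth (φ.relabel g) = qDepth φ :=
  qDepth_mapTermRel _ _ _ (fun _ ψ => qDepth_castLE _ ψ) φ

theorem qDepth_toFormula :
    ∀ {l : ℕ} (φ : L.BoundedFormula α l), qDepth φ.toFormula = qDepth φ
  | _, .falsum | _, .equal _ _ | _, .rel _ _ => rfl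
  | _, .imp f g => by
    simp [BoundedFormula.toFormula, qDepth, qDepth_toFormula f, qDepth_toFormula g]
  | _, .all f => by simp [BoundedFormula.toFormula, qDepth, qDepth_relabel, qDepth_toFormula f]

theorem qDepth_eq_zero_of_isAtomic {l : ℕ} {φ : L.BoundedFormula α l}
    (hφ : φ.IsAtomic) : qDepth φ = 0 := by
  cases hφ <;> rfl

theorem realize_iff_of_isAtomic_of_all {v v' : α → M} {d : ℕ}
    (hatom : ∀ ψ : L.Formula α, ψ.IsAtomic → (ψ.Realize v ↔ ψ.Realize v'))
    (hall : ∀ f : L.BoundedFormula α 1, qDepth f < d →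
      (Formula.Realize f.all v ↔ Formula.Realize f.all v')) :
    ∀ φ : L.Formula α, qDepth φ ≤ d → (φ.Realize v ↔ φ.Realize v')
  | .falsum, _ => Iff.rfl
  | .equal t₁ t₂, _ => hatom _ (.equal t₁ t₂)
  | .rel R ts, _ => hatom _ (.rel R ts)
  | .imp f g, h => imp_congr (realize_iff_of_isAtomic_of_all hatom hall f (le_of_max_le_left h))
      (realize_iff_of_isAtomic_of_all hatom hall g (le_of_max_le_right h))
  | .all f, h => hall f h

end Formulas

section Quantifier

variable {M : Type u} {A : Set M} {n : ℕ}

def openBoundAt (c : A) (f : L.BoundedFormula (A ⊕ Fin n) 1) : L.Formula (A ⊕ Fin n) :=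
  f.toFormula.relabel (Sum.elim id fun _ => Sum.inl c)

def openBound (f : L.BoundedFormula (A ⊕ Fin n) 1) : L.Formula (A ⊕ Fin (n + 1)) :=
  f.toFormula.relabel (Sum.elim (Sum.map id Fin.castSucc) fun _ => Sum.inr (Fin.last n))

theorem qDepth_openBoundAt (c : A) (f : L.BoundedFormula (A ⊕ Fin n) 1) :
    qDepth (openBoundAt c f) = qDepth f := by
  rw [openBoundAt, Formula.relabel, qDepth_relabel, qDepth_toFormula]

theorem qDepth_openBound (f : L.BoundedFormula (A ⊕ Fin n) 1) :
    qDepth (openBound f) = qDepth f := by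
  rw [openBound, Formula.relabel, qDepth_relabel, qDepth_toFormula]

variable [L.Structure M]

theorem realize_relabel_toFormula {β γ : Type*} (f : L.BoundedFormula β 1)
    (g : β ⊕ Fin 1 → γ) (w : γ → M) :
    (f.toFormula.relabel g).Realize w ↔
      f.Realize (w ∘ g ∘ Sum.inl) fun _ => w (g (Sum.inr 0)) := by
  rw [Formula.realize_relabel, ← Sum.elim_comp_inl_inr (w ∘ g),
    BoundedFormula.realize_toFormula]
  exact iff_of_eq (congrArg _ (funext fun i => by rw [Subsingleton.elim i 0]; rfl))

theorem realize_openBoundAt (c : A) (f : L.BoundedFormula (A ⊕ Fin n) 1) (a : Fin n → M) :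
    (openBoundAt c f).Realize (Sum.elim Subtype.val a) ↔
      f.Realize (Sum.elim Subtype.val a) fun _ => c := by
  rw [openBoundAt, realize_relabel_toFormula]
  rfl

theorem realize_openBound (f : L.BoundedFormula (A ⊕ Fin n) 1) (a : Fin n → M) (c : M) :
    (openBound f).Realize (Sum.elim Subtype.val (Fin.snoc a c)) ↔
      f.Realize (Sum.elim Subtype.val a) fun _ => c := by
  rw [openBound, realize_relabel_toFormula]
  refine iff_of_eq (congrArg₂ _ (funext fun x => ?_) (by simp))
  cases x <;> simp

theorem realize_all_iff_openBound (f : L.BoundedFormula (A ⊕ Fin n) 1) (a : Fin n → M) :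
    Formula.Realize f.all (Sum.elim Subtype.val a) ↔
      (∀ c : A, (openBoundAt c f).Realize (Sum.elim Subtype.val a)) ∧
        ∀ c ∉ A, (openBound f).Realize (Sum.elim Subtype.val (Fin.snoc a c)) := by
  simp only [realize_openBoundAt, realize_openBound, Subtype.forall]
  rw [← forall_and]
  refine BoundedFormula.realize_all.trans (forall_congr' fun c => ?_)
  have hsnoc : Fin.snoc default c = fun _ : Fin 1 => c := funext fun _ => by simp [Fin.snoc]
  rw [hsnoc]
  by_cases hc : c ∈ A <;> simp [hc]

end Quantifier

theorem forall_mem_iff_of_image_eq {ι X : Type*} {s : Set ι} {g g' : ι → X}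
    {P P' : ι → Prop} (hP : ∀ c c', g c = g' c' → (P c ↔ P' c')) (h : g '' s = g' '' s) :
    (∀ c ∈ s, P c) ↔ ∀ c ∈ s, P' c := by
  constructor
  · intro H c' hc'
    obtain ⟨c, hc, hcc'⟩ : g' c' ∈ g '' s := h ▸ mem_image_of_mem g' hc'
    exact (hP c c' hcc').mp (H c hc)
  · intro H c hc
    obtain ⟨c', hc', hcc'⟩ : g c ∈ g' '' s := h ▸ mem_image_of_mem g hc
    exact (hP c c' hcc'.symm).mpr (H c' hc')

theorem exists_sumInl_onTerm_eq {L' : FirstOrder.Language} [L'.IsRelational]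
    {β : Type v} : ∀ t : (L.sum L').Term β, ∃ s : L.Term β, LHom.sumInl.onTerm s = t
  | .var x => ⟨.var x, rfl⟩
  | .func (.inl f) ts => by
    choose s hs using fun i => exists_sumInl_onTerm_eq (ts i)
    exact ⟨.func f s, by simp only [LHom.onTerm, hs]; rfl⟩
  | .func (.inr f) _ => isEmptyElim f

instance (k : ℕ) : (unaryLang k).IsRelational := fun _ => inferInstanceAs (IsEmpty Empty)

section UnaryExpansion

variable {N : Type u} [L.Structure N] {A : Set N} {k : ℕ} [(unaryLang k).Structure N] {n : ℕ}

variable (k) in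
def colour (c : N) : Set (Fin k) := {i | Structure.RelMap (L := unaryLang k) (n := 1) i ![c]}

variable (L A) in
def tp (a : Fin n → N) : Σ m : ℕ, Set (L.Formula (A ⊕ Fin m)) := ⟨n, tpSet A a⟩

variable (L A k) in
def EFTypes : ℕ → Type u
  | 0 => (Σ m : ℕ, Set (L.Formula (A ⊕ Fin m))) ×
      Set ((Σ m : ℕ, Set (L.Formula (A ⊕ Fin m))) × Set (Fin k))
  | d + 1 => EFTypes d × Set (EFTypes d)

variable (L A k) in
def efType : (d : ℕ) → {n : ℕ} → (Fin n → N) → EFTypes L A k d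
  | 0, _, a => (tp L A a, (fun c => (tp L A (Fin.snoc a c), colour k c)) '' Aᶜ)
  | d + 1, _, a => (efType d a, (fun c => efType d (Fin.snoc a c)) '' Aᶜ)

end UnaryExpansion

section Determinacy

variable {N : Type u} [L.Structure N] {A : Set N} {k : ℕ} [(unaryLang k).Structure N] {n : ℕ}

theorem realize_sumInl_onFormula_iff {L' : FirstOrder.Language} [L'.Structure N]
    {a a' : Fin n → N} (htp : tpSet (L := L) A a = tpSet A a') (ψ : L.Formula (A ⊕ Fin n)) :
    (LHom.sumInl.onFormula ψ : (L.sum L').Formula _).Realize (Sum.elim Subtype.val a) ↔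
      (LHom.sumInl.onFormula ψ : (L.sum L').Formula _).Realize (Sum.elim Subtype.val a') := by
  rw [LHom.realize_onFormula, LHom.realize_onFormula]
  exact Set.ext_iff.mp htp ψ

theorem tpSet_eq_of_tp_eq {a a' : Fin n → N} (h : tp L A a = tp L A a') :
    tpSet (L := L) A a = tpSet A a' :=
  sigma_mk_injective (β := fun m => Set (L.Formula (A ⊕ Fin m))) h

theorem colour_realize_eq {a a' : Fin n → N} (htp : tpSet (L := L) A a = tpSet A a')
    (hcol : ∀ c ∉ A, ∃ c' ∉ A,
      tpSet (L := L) A (Fin.snoc a c) = tpSet A (Fin.snoc a' c') ∧ colour k c = colour k c')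
    (s : L.Term (A ⊕ Fin n)) :
    colour k (s.realize (Sum.elim Subtype.val a)) =
      colour k (s.realize (Sum.elim Subtype.val a')) := by
  by_cases hx : s.realize (Sum.elim Subtype.val a) ∈ A
  · have h : (s.equal (Term.var (Sum.inl ⟨_, hx⟩))).Realize (Sum.elim Subtype.val a') :=
      (Set.ext_iff.mp htp (s.equal (Term.var (Sum.inl ⟨_, hx⟩)))).mp
        (Formula.realize_equal.mpr rfl)
    rw [Formula.realize_equal] at h
    rw [h]
    rfl
  · obtain ⟨c', hc', htp', hcol'⟩ := hcol _ hx
    let φ : L.Formula (A ⊕ Fin (n + 1)) :=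
      (s.relabel (Sum.map id Fin.castSucc)).equal (Term.var (Sum.inr (Fin.last n)))
    have h : φ.Realize (Sum.elim Subtype.val (Fin.snoc a' c')) :=
      (Set.ext_iff.mp htp' φ).mp (by simp [φ, tpSet, Term.realize_relabel, Sum.elim_comp_map])
    simp only [φ, Formula.realize_equal, Term.realize_relabel, Sum.elim_comp_map,
      Function.comp_id, Fin.snoc_comp_castSucc, Term.realize_var, Sum.elim_inr, Fin.snoc_last] at h
    rw [hcol', h]

theorem realize_sumInr_boundedFormula_iff {β : Type*} (i : (unaryLang k).Relations 1)
    (s : Fin 1 → L.Term (β ⊕ Fin 0)) (v : β → N) :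
    Formula.Realize (Relations.boundedFormula (L := L.sum (unaryLang k)) (Sum.inr i)
      fun j => LHom.sumInl.onTerm (s j)) v ↔
      i ∈ colour k (((s 0).relabel (Sum.elim id finZeroElim)).realize v) := by
  have hs : (fun j => (LHom.sumInl.onTerm (s j) : (L.sum (unaryLang k)).Term _).realize
      (Sum.elim v default)) = ![((s 0).relabel (Sum.elim id finZeroElim)).realize v] := by
    funext j
    rw [Fin.fin_one_eq_zero j, LHom.realize_onTerm, Term.realize_relabel, Sum.comp_elim]
    exact congrArg₂ _ (congrArg₂ _ rfl (Subsingleton.elim _ _)) rfl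
  exact iff_of_eq (congrArg (Structure.RelMap (L := unaryLang k) i) hs)

theorem exists_colour_eq_of_efType_zero_eq {a a' : Fin n → N}
    (h : efType L A k 0 a = efType L A k 0 a') (c : N) (hc : c ∉ A) : ∃ c' ∉ A,
      tpSet (L := L) A (Fin.snoc a c) = tpSet A (Fin.snoc a' c') ∧ colour k c = colour k c' := by
  have himage : (fun c => (tp L A (Fin.snoc a c), colour k c)) '' Aᶜ =
      (fun c => (tp L A (Fin.snoc a' c), colour k c)) '' Aᶜ := congrArg Prod.snd h
  obtain ⟨c', hc', hcc'⟩ := himage ▸ mem_image_of_mem _ hc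
  obtain ⟨h₁, h₂⟩ := Prod.ext_iff.mp hcc'
  exact ⟨c', hc', (tpSet_eq_of_tp_eq h₁).symm, h₂.symm⟩

theorem realize_iff_of_isAtomic {a a' : Fin n → N} (h : efType L A k 0 a = efType L A k 0 a')
    {ψ : (L.sum (unaryLang k)).Formula (A ⊕ Fin n)} (hψ : ψ.IsAtomic) :
    ψ.Realize (Sum.elim Subtype.val a) ↔ ψ.Realize (Sum.elim Subtype.val a') := by
  have htp : tpSet (L := L) A a = tpSet A a' := tpSet_eq_of_tp_eq (congrArg Prod.fst h)
  have hcol := exists_colour_eq_of_efType_zero_eq h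
  cases hψ with
  | equal t₁ t₂ =>
    obtain ⟨s₁, rfl⟩ := exists_sumInl_onTerm_eq t₁
    obtain ⟨s₂, rfl⟩ := exists_sumInl_onTerm_eq t₂
    exact realize_sumInl_onFormula_iff htp (s₁.bdEqual s₂)
  | @rel l R ts =>
    choose s hs using fun i => exists_sumInl_onTerm_eq (ts i)
    obtain rfl : ts = fun i => LHom.sumInl.onTerm (s i) := funext fun i => (hs i).symm
    rcases R with R | i
    · exact realize_sumInl_onFormula_iff htp (R.boundedFormula s)
    · match l, i, s with
      | 1, i, s =>
        rw [realize_sumInr_boundedFormula_iff, realize_sumInr_boundedFormula_iff,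
          colour_realize_eq htp hcol]

theorem realize_iff_of_efType_eq : ∀ (d : ℕ) {n : ℕ} {a a' : Fin n → N},
    efType L A k d a = efType L A k d a' →
    ∀ φ : (L.sum (unaryLang k)).Formula (A ⊕ Fin n), qDepth φ ≤ d →
      (φ.Realize (Sum.elim Subtype.val a) ↔ φ.Realize (Sum.elim Subtype.val a'))
  | 0, _, _, _, h => realize_iff_of_isAtomic_of_all (fun _ hψ => realize_iff_of_isAtomic h hψ)
      fun _ hf => absurd hf (Nat.not_lt_zero _)
  | d + 1, n, a, a', h => by
    have h_d : efType L A k d a = efType L A k d a' := congrArg Prod.fst h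
    have himage : (fun c => efType L A k d (Fin.snoc a c)) '' Aᶜ =
        (fun c => efType L A k d (Fin.snoc a' c)) '' Aᶜ := congrArg Prod.snd h
    refine realize_iff_of_isAtomic_of_all (fun ψ hψ => realize_iff_of_efType_eq d h_d ψ
      ((qDepth_eq_zero_of_isAtomic hψ).trans_le (Nat.zero_le d))) fun f hf => ?_
    have hf : qDepth f ≤ d := Nat.lt_succ_iff.mp hf
    rw [realize_all_iff_openBound, realize_all_iff_openBound]
    refine and_congr (forall_congr' fun c => realize_iff_of_efType_eq d h_d _
      ((qDepth_openBoundAt c f).trans_le hf)) ?_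
    exact forall_mem_iff_of_image_eq (fun c c' hcc' => realize_iff_of_efType_eq d hcc' _
      ((qDepth_openBound f).trans_le hf)) himage

theorem tp_eq_of_efType_eq {n m : ℕ} {a : Fin n → N} {b : Fin m → N}
    (h : ∀ d, efType L A k d a = efType L A k d b) :
    tp (L.sum (unaryLang k)) A a = tp (L.sum (unaryLang k)) A b := by
  obtain rfl : n = m := congrArg Sigma.fst (congrArg Prod.fst (h 0))
  exact congrArg (Sigma.mk n) (Set.ext fun φ => realize_iff_of_efType_eq _ (h _) φ le_rfl)

end Determinacy

section Cardinals

theorem mk_range_le_of_factorsThrough {ι α β : Type u} {f : ι → α} {g : ι → β}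
    (h : g.FactorsThrough f) : #(range g) ≤ #(range f) := by
  refine mk_le_of_surjective
    (f := fun x : range f => (⟨g x.2.choose, mem_range_self _⟩ : range g)) ?_
  rintro ⟨_, i, rfl⟩
  have hi : f i ∈ range f := mem_range_self i
  exact ⟨⟨f i, hi⟩, Subtype.ext (h hi.choose_spec)⟩

theorem mk_range_pi_le {ι : Type*} {J : Type w} {β : J → Type v} (F : ∀ j, ι → β j) :
    #(range fun i j => F j i) ≤ prod fun j => #(range (F j)) :=
  calc #(range fun i j => F j i)
      ≤ #(univ.pi fun j => range (F j)) :=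
        mk_le_mk_of_subset (by rintro _ ⟨i, rfl⟩ j -; exact mem_range_self i)
    _ = prod fun j => #(range (F j)) := by rw [mk_congr (Equiv.Set.univPi _), mk_pi]

theorem mk_range_le_mul_two_power {ι X Y : Type u} (g : ι → X × Set Y) {R : Set X} {R' : Set Y}
    (h₁ : ∀ i, (g i).1 ∈ R) (h₂ : ∀ i, (g i).2 ⊆ R') : #(range g) ≤ #R * 2 ^ #R' :=
  calc #(range g)
      ≤ #(R ×ˢ 𝒫 R') := mk_le_mk_of_subset (by rintro _ ⟨i, rfl⟩; exact ⟨h₁ i, h₂ i⟩)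
    _ = #R * 2 ^ #R' := by
      rw [mk_congr (Equiv.Set.prod _ _), mk_prod, lift_id, lift_id, mk_powerset]

noncomputable def bethOmega (κ : Cardinal.{u}) : Cardinal.{u} :=
  ⨆ n : ℕ, iterPow κ n

theorem iterPow_le_bethOmega (κ : Cardinal.{u}) (n : ℕ) : iterPow κ n ≤ bethOmega κ :=
  le_ciSup bddAbove_of_small n

theorem lt_bethOmega (κ : Cardinal.{u}) : κ < bethOmega κ :=
  (cantor κ).trans_le (iterPow_le_bethOmega κ 1)

theorem isStrongLimit_bethOmega (κ : Cardinal.{u}) : IsStrongLimit (bethOmega κ) where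
  ne_zero := (pos_of_gt (lt_bethOmega κ)).ne'
  isStrongPrelimit x hx := by
    obtain ⟨n, hn⟩ := exists_lt_of_lt_ciSup hx
    calc 2 ^ x ≤ iterPow κ (n + 1) := power_le_power_left two_ne_zero hn.le
      _ < iterPow κ (n + 2) := cantor _
      _ ≤ bethOmega κ := iterPow_le_bethOmega κ _

theorem prod_le_bethOmega1 {κ : Cardinal.{u}} {f : ℕ → Cardinal.{u}}
    (hf : ∀ d, f d < bethOmega κ) : prod f ≤ bethOmega1 κ :=
  calc prod f
      ≤ prod fun _ : ℕ => bethOmega κ := prod_le_prod _ _ fun d => (hf d).le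
    _ = bethOmega κ ^ ℵ₀ := by simp [prod_const]
    _ ≤ (2 ^ bethOmega κ) ^ ℵ₀ := power_le_power_right (cantor _).le
    _ = bethOmega1 κ := by
      rw [← power_mul, mul_aleph0_eq (isStrongLimit_bethOmega κ).aleph0_le]
      rfl

end Cardinals

section Counting

variable {N : Type u} [L.Structure N] {A : Set N} {k : ℕ} [(unaryLang k).Structure N]

abbrev OutsideTuple (N : Type u) (A : Set N) : Type u :=
  Σ n : ℕ, {a : Fin n → N // ∀ i, a i ∉ A}

theorem snoc_notMem {n : ℕ} {a : Fin n → N} (ha : ∀ i, a i ∉ A) {c : N} (hc : c ∉ A) :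
    ∀ i, Fin.snoc (α := fun _ => N) a c i ∉ A :=
  Fin.lastCases (by simpa using hc) fun i => by simpa using ha i

theorem mk_range_efType_lt (d : ℕ) :
    #(range fun p : OutsideTuple N A => efType L A k d p.2.1) < bethOmega (rtp L N A) := by
  have hS := isStrongLimit_bethOmega (rtp L N A)
  induction d with
  | zero =>
    have hκ : #(range fun p : OutsideTuple N A => tp L A p.2.1) < bethOmega (rtp L N A) :=
      lt_bethOmega _
    refine (mk_range_le_mul_two_power _ (fun p => mem_range_self p)
      (R' := (range fun p : OutsideTuple N A => tp L A p.2.1) ×ˢ Set.univ) ?_).trans_lt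
      (mul_lt_of_lt hS.aleph0_le hκ (hS.isStrongPrelimit ?_))
    · rintro ⟨n, a, ha⟩ _ ⟨c, hc, rfl⟩
      exact ⟨⟨⟨n + 1, Fin.snoc a c, snoc_notMem ha hc⟩, rfl⟩, trivial⟩
    · rw [mk_congr (Equiv.Set.prod _ _), mk_prod, lift_uzero]
      exact mul_lt_of_lt hS.aleph0_le hκ
        ((lift_lt_aleph0.2 (lt_aleph0_of_finite _)).trans_le hS.aleph0_le)
  | succ d ih =>
    refine (mk_range_le_mul_two_power _ (fun p => mem_range_self p) ?_).trans_lt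
      (mul_lt_of_lt hS.aleph0_le ih (hS.isStrongPrelimit ih))
    rintro ⟨n, a, ha⟩ _ ⟨c, hc, rfl⟩
    exact ⟨⟨n + 1, Fin.snoc a c, snoc_notMem ha hc⟩, rfl⟩

end Counting

/-- For `N⁺` the expansion of `N` by `k` unary predicates,
`rtp(N⁺, A) ≤ ℶ_{ω+1}(rtp(N, A))`. -/
theorem statement18 {L : FirstOrder.Language.{u, u}} {N : Type u} [inst : L.Structure N]
    (k : ℕ) (U : Fin k → Set N) (A : Set N) :
    @rtp (L.sum (unaryLang k)) N
        (@FirstOrder.Language.sumStructure L (unaryLang k) N inst (unaryStructure k U)) A ≤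
      bethOmega1 (rtp L N A) := by
  let _ : (unaryLang k).Structure N := unaryStructure k U
  calc rtp (L.sum (unaryLang k)) N A
      = #(range fun p : OutsideTuple N A => tp (L.sum (unaryLang k)) A p.2.1) := rfl
    _ ≤ #(range fun (p : OutsideTuple N A) (d : ℕ) => efType L A k d p.2.1) :=
      mk_range_le_of_factorsThrough fun _ _ h => tp_eq_of_efType_eq (congrFun h)
    _ ≤ prod fun d => #(range fun p : OutsideTuple N A => efType L A k d p.2.1) :=
      mk_range_pi_le _
    _ ≤ bethOmega1 (rtp L N A) := prod_le_bethOmega1 mk_range_efType_lt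

end MonadicNIP
end

section
/- Suppose Age(M), the class of finite substructures of M, is (n+1)-wqo. Then for any expansion M* of M by finitely many constants, Age(M*) is n-wqo. -/
open FirstOrder FirstOrder.Language Cardinal Set

universe u v w

namespace MonadicNIP

variable {L : FirstOrder.Language.{u, u}} {C : Type u} [L.Structure C]

/-- The language consisting of `m` constant symbols. -/
def constLang (m : ℕ) : FirstOrder.Language.{0, 0} :=
  ⟨fun n => match n with | 0 => Fin m | _ => Empty, fun _ => Empty⟩

/-- The structure on `N` interpreting the `m` constants as `c i`. -/
def constStructure {N : Type u} (m : ℕ) (c : Fin m → N) :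
    (constLang m).Structure N where
  funMap := fun {n} f x => match n, f with
    | 0, i => c i
  RelMap := fun r _ => r.elim

/-- `Age(M)` is well-quasi-ordered under embeddability: there is no infinite antichain
of finite substructures of `M`. -/
def AgeWqo (L : FirstOrder.Language.{u, u}) (M : Type u) [L.Structure M] : Prop :=
  ¬ ∃ S : ℕ → L.Substructure M, (∀ i, (S i : Set M).Finite) ∧
      ∀ i j : ℕ, i ≠ j → IsEmpty ((S i) ↪[L] (S j))

/-- `Age(M)` is `n`-wqo: for every expansion of `M` by `n` unary predicates
partitioning the universe, the age of the expansion is wqo. -/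
def AgeNWqo (L : FirstOrder.Language.{u, u}) (M : Type u) [inst : L.Structure M]
    (n : ℕ) : Prop :=
  ∀ U : Fin n → Set M, (∀ x : M, ∃! i, x ∈ U i) →
    @AgeWqo (L.sum (unaryLang n)) M
      (@FirstOrder.Language.sumStructure L (unaryLang n) M inst (unaryStructure n U))

/-!
Let `R` be the finite set of named constants. An infinite antichain `Sᵢ` in the age of `M*`
expanded by a partition `U` into `n` parts is an infinite sequence in the age of `M` expanded by
the partition `V` into the `n + 1` parts `Uᵣ \ R` and `R`. Since the latter age is wqo, applying the
infinite Erdős–Szekeres theorem twice gives a subsequence in which consecutive members embed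
forward, or consecutive members embed backward, preserving `V`. Every such embedding permutes `R`.
The partial products of these permutations lie in the finite group `Sym(R)`, so two of them
coincide, and the composite embedding between the corresponding members fixes `R` pointwise.
Hence it preserves the constants and `U`, contradicting the antichain.
-/

theorem exists_lt_of_forall_succ {G : Type*} [Group G] [Finite G] {P : ℕ → ℕ → G → Prop}
    (hcomp : ∀ {i j k g h}, P i j g → P j k h → P i k (h * g))
    (hstep : ∀ k, ∃ g, P k (k + 1) g) : ∃ a b, a < b ∧ P a b 1 := by
  choose σ hσ using hstep
  let π : ℕ → G := fun k => Nat.rec 1 (fun k p => σ k * p) k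
  have hπ : ∀ a b, a < b → P a b (π b * (π a)⁻¹) := by
    intro a b hab
    induction b, hab using Nat.le_induction with
    | base => simpa [π] using hσ a
    | succ b _ ih => simpa [π, mul_assoc] using hcomp ih (hσ b)
  obtain ⟨a, b, hne, heq⟩ := Finite.exists_ne_map_eq_of_infinite π
  rcases hne.lt_or_gt with hab | hab
  · exact ⟨a, b, hab, by simpa [heq] using hπ a b hab⟩
  · exact ⟨b, a, hab, by simpa [heq] using hπ b a hab⟩

theorem exists_lt_of_forall_succ_rev {G : Type*} [Group G] [Finite G] {P : ℕ → ℕ → G → Prop}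
    (hcomp : ∀ {i j k g h}, P i j g → P j k h → P i k (h * g))
    (hstep : ∀ k, ∃ g, P (k + 1) k g) : ∃ a b, a < b ∧ P b a 1 := by
  simpa using exists_lt_of_forall_succ (P := fun i j g => P j i g⁻¹)
    (fun h₁ h₂ => by simpa using hcomp h₂ h₁)
    (fun k => let ⟨g, hg⟩ := hstep k; ⟨g⁻¹, by simpa using hg⟩)

theorem exists_chain_or_antichain (r : ℕ → ℕ → Prop) :
    ∃ g : ℕ ↪o ℕ, (∀ n, r (g n) (g (n + 1))) ∨ (∀ n, r (g (n + 1)) (g n)) ∨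
      ∀ m n, m ≠ n → ¬r (g m) (g n) := by
  obtain ⟨g, hg | hg⟩ := exists_increasing_or_nonincreasing_subseq' r id
  · exact ⟨g, .inl hg⟩
  obtain ⟨g', hg' | hg'⟩ := exists_increasing_or_nonincreasing_subseq' (flip r) g
  · exact ⟨g'.trans g, .inr (.inl hg')⟩
  · refine ⟨g'.trans g, .inr (.inr fun m n hmn => ?_)⟩
    rcases hmn.lt_or_gt with h | h
    · exact hg _ _ (g'.strictMono h)
    · exact hg' _ _ h

theorem existsUnique_mem_snoc_sdiff {α : Type*} {n : ℕ} {U : Fin n → Set α}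
    (hU : ∀ x, ∃! i, x ∈ U i) (R : Set α) (x : α) :
    ∃! i, x ∈ (Fin.snoc (fun i => U i \ R) R : Fin (n + 1) → Set α) i := by
  by_cases hx : x ∈ R
  · refine ⟨Fin.last n, by simpa using hx, fun i hi => ?_⟩
    induction i using Fin.lastCases with
    | last => rfl
    | cast i => simp [hx] at hi
  · obtain ⟨i, hi, huniq⟩ := hU x
    refine ⟨i.castSucc, by simpa using ⟨hi, hx⟩, fun j hj => ?_⟩
    induction j using Fin.lastCases with
    | last => simp [hx] at hj
    | cast j => simp only [Fin.snoc_castSucc] at hj; rw [huniq j hj.1]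

section Embeddings

variable {M : Type u} [L.Structure M] {A B D : L.Substructure M}

def PreservesSets {ι : Type*} (V : ι → Set M) (F : A ↪[L] B) : Prop :=
  ∀ (x : A) (r : ι), (F x : M) ∈ V r ↔ (x : M) ∈ V r

theorem PreservesSets.comp {ι : Type*} {V : ι → Set M} {F : A ↪[L] B} {G : B ↪[L] D}
    (hF : PreservesSets V F) (hG : PreservesSets V G) : PreservesSets V (G.comp F) :=
  fun x r => (hG (F x) r).trans (hF x r)

theorem PreservesSets.of_snoc_sdiff {n : ℕ} {U : Fin n → Set M} {R : Set M} {F : A ↪[L] B}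
    (hF : PreservesSets (Fin.snoc (fun i => U i \ R) R : Fin (n + 1) → Set M) F)
    (hfix : ∀ x : A, (x : M) ∈ R → (F x : M) = x) : PreservesSets U F := by
  intro x r
  by_cases hx : (x : M) ∈ R
  · rw [hfix x hx]
  · have hlast := hF x (Fin.last n)
    simp only [Fin.snoc_last] at hlast
    have hFx : (F x : M) ∉ R := hlast.not.2 hx
    simpa [hx, hFx] using hF x r.castSucc

def IsRestriction (R : Set M) (F : A ↪[L] B) (σ : Equiv.Perm R) : Prop :=
  ∀ (x : A) (hx : (x : M) ∈ R), (F x : M) = σ ⟨x, hx⟩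

theorem IsRestriction.comp {R : Set M} (hRB : R ⊆ B) {F : A ↪[L] B} {G : B ↪[L] D}
    {σ τ : Equiv.Perm R} (hF : IsRestriction R F σ) (hG : IsRestriction R G τ) :
    IsRestriction R (G.comp F) (τ * σ) := by
  intro x hx
  have hFx : F x = ⟨σ ⟨x, hx⟩, hRB (σ ⟨x, hx⟩).2⟩ := Subtype.ext (hF x hx)
  simp only [Embedding.comp_apply, hFx, Equiv.Perm.mul_apply]
  exact hG _ _

theorem exists_isRestriction {R : Set M} [Finite R] (hRA : R ⊆ A) (F : A ↪[L] B)
    (hF : ∀ x : A, (x : M) ∈ R → (F x : M) ∈ R) : ∃ σ : Equiv.Perm R, IsRestriction R F σ := by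
  let f : R → R := fun x => ⟨F ⟨x, hRA x.2⟩, hF _ x.2⟩
  have hf : f.Injective := fun x y hxy => Subtype.ext (by simpa [f] using hxy)
  exact ⟨Equiv.ofBijective f (Finite.injective_iff_bijective.mp hf), fun x hx => rfl⟩

instance isRelational_unaryLang (k : ℕ) : (unaryLang k).IsRelational :=
  fun _ => inferInstanceAs (IsEmpty Empty)

def Substructure.toSum {L' : FirstOrder.Language} [L'.Structure M] [L'.IsRelational]
    (S : L.Substructure M) : (L.sum L').Substructure M where
  carrier := S
  fun_mem {_} f := match f with
    | .inl f => S.fun_mem f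
    | .inr f => isEmptyElim f

theorem AgeNWqo.exists_preservesSets {k : ℕ} (h : AgeNWqo L M k) {V : Fin k → Set M}
    (hV : ∀ x, ∃! r, x ∈ V r) (S : ℕ → L.Substructure M) (hfin : ∀ i, (S i : Set M).Finite) :
    ∃ i j, i ≠ j ∧ ∃ F : S i ↪[L] S j, PreservesSets V F := by
  let _ := unaryStructure k V
  by_contra! hS
  refine h V hV ⟨fun i => Substructure.toSum (S i), hfin,
    fun i j hij => ⟨fun F => hS i j hij ?_ ?_⟩⟩
  · exact ⟨⟨F, F.injective⟩, fun f x => F.map_fun (Sum.inl f) x,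
      fun r x => F.map_rel (Sum.inl r) x⟩
  · exact fun x r => F.map_rel (Sum.inr r : (L.sum (unaryLang k)).Relations 1) ![x]

theorem AgeNWqo.exists_embedding_fixing {k : ℕ} (h : AgeNWqo L M k) {V : Fin k → Set M}
    (hV : ∀ x, ∃! r, x ∈ V r) {r₀ : Fin k} (hR : (V r₀).Finite) (S : ℕ → L.Substructure M)
    (hfin : ∀ i, (S i : Set M).Finite) (hRS : ∀ i, V r₀ ⊆ S i) :
    ∃ i j, i ≠ j ∧ ∃ F : S i ↪[L] S j,
      PreservesSets V F ∧ ∀ x : S i, (x : M) ∈ V r₀ → (F x : M) = x := by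
  have := hR.to_subtype
  obtain ⟨g, hchain⟩ : ∃ g : ℕ ↪o ℕ,
      (∀ n, ∃ F : S (g n) ↪[L] S (g (n + 1)), PreservesSets V F) ∨
        ∀ n, ∃ F : S (g (n + 1)) ↪[L] S (g n), PreservesSets V F := by
    obtain ⟨g, hg | hg | hanti⟩ :=
      exists_chain_or_antichain fun i j => ∃ F : S i ↪[L] S j, PreservesSets V F
    · exact ⟨g, .inl hg⟩
    · exact ⟨g, .inr hg⟩
    · obtain ⟨i, j, hij, hF⟩ := h.exists_preservesSets hV (S ∘ g) (fun i => hfin _)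
      exact absurd hF (hanti i j hij)
  let P i j σ := ∃ F : S (g i) ↪[L] S (g j), PreservesSets V F ∧ IsRestriction (V r₀) F σ
  have hcomp {i j l σ τ} : P i j σ → P j l τ → P i l (τ * σ) :=
    fun ⟨F, hFV, hFσ⟩ ⟨G, hGV, hGτ⟩ => ⟨G.comp F, hFV.comp hGV, hFσ.comp (hRS _) hGτ⟩
  have hlabel {i j} : (∃ F : S (g i) ↪[L] S (g j), PreservesSets V F) → ∃ σ, P i j σ :=
    fun ⟨F, hF⟩ => (exists_isRestriction (hRS _) F fun x hx => (hF x r₀).2 hx).imp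
      fun σ hσ => ⟨F, hF, hσ⟩
  have hfix {i j} (hij : i ≠ j) : P i j 1 → ∃ i j, i ≠ j ∧ ∃ F : S i ↪[L] S j,
      PreservesSets V F ∧ ∀ x : S i, (x : M) ∈ V r₀ → (F x : M) = x :=
    fun ⟨F, hF, h1⟩ => ⟨g i, g j, g.injective.ne hij, F, hF, h1⟩
  rcases hchain with hchain | hchain
  · obtain ⟨a, b, hab, hP⟩ := exists_lt_of_forall_succ hcomp fun k => hlabel (hchain k)
    exact hfix hab.ne hP
  · obtain ⟨a, b, hab, hP⟩ := exists_lt_of_forall_succ_rev hcomp fun k => hlabel (hchain k)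
    exact hfix hab.ne' hP

theorem ageNWqo_sum_constLang_of {m n : ℕ} (c : Fin m → M)
    (h : ∀ U : Fin n → Set M, (∀ x, ∃! i, x ∈ U i) → ∀ S : ℕ → L.Substructure M,
      (∀ i, (S i : Set M).Finite) → (∀ i, range c ⊆ S i) → ∃ i j, i ≠ j ∧
        ∃ F : S i ↪[L] S j, PreservesSets U F ∧ ∀ x : S i, (x : M) ∈ range c → (F x : M) = x) :
    @AgeNWqo (L.sum (constLang m)) M
      (@FirstOrder.Language.sumStructure L (constLang m) M _ (constStructure m c)) n := by
  let _ := constStructure m c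
  rintro U hU ⟨S, hfin, hanti⟩
  let _ := unaryStructure n U
  let reduct (T : ((L.sum (constLang m)).sum (unaryLang n)).Substructure M) : L.Substructure M :=
    LHom.sumInl.substructureReduct (LHom.sumInl.substructureReduct T)
  obtain ⟨i, j, hij, F, hFU, hFc⟩ := h U hU (fun i => reduct (S i)) hfin
    fun i => range_subset_iff.2 fun t => (S i).constants_mem (Sum.inl (Sum.inr t))
  refine (hanti i j hij).false ⟨⟨F, F.injective⟩, ?_, ?_⟩
  · intro l f x
    rcases f with (f | t) | f
    · exact F.map_fun f x
    · rcases l with _ | l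
      · exact Subtype.ext (hFc _ ⟨t, rfl⟩)
      · exact Empty.elim t
    · exact Empty.elim f
  · intro l r x
    rcases r with (r | r) | r
    · exact F.map_rel r x
    · exact Empty.elim r
    · rcases l with _ | _ | l
      · exact Empty.elim r
      · exact hFU (x 0) r
      · exact Empty.elim r

end Embeddings

theorem statement19_general {L : FirstOrder.Language.{u, u}} {M : Type u} [inst : L.Structure M]
    (n m : ℕ) (h : AgeNWqo L M (n + 1)) (c : Fin m → M) :
    @AgeNWqo (L.sum (constLang m)) M
      (@FirstOrder.Language.sumStructure L (constLang m) M inst (constStructure m c))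
      n := by
  refine ageNWqo_sum_constLang_of c fun U hU S hfin hcS => ?_
  obtain ⟨i, j, hij, F, hF, hfix⟩ := h.exists_embedding_fixing
    (existsUnique_mem_snoc_sdiff hU (range c)) (r₀ := Fin.last n)
    (by simpa using finite_range c) S hfin (by simpa using hcS)
  simp only [Fin.snoc_last] at hfix
  exact ⟨i, j, hij, F, hF.of_snoc_sdiff hfix, hfix⟩

/-- In a relational language with finitely many constants, if `Age(M)`
is `(n+1)`-wqo, then for any expansion `M*` of `M` by finitely many constants,
`Age(M*)` is `n`-wqo. -/
theorem statement19 {L : FirstOrder.Language.{u, u}} {M : Type u} [inst : L.Structure M]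
    (hrel : ∀ k : ℕ, IsEmpty (L.Functions (k + 1))) (hconst : Finite (L.Functions 0))
    (n m : ℕ) (h : AgeNWqo L M (n + 1)) (c : Fin m → M) :
    @AgeNWqo (L.sum (constLang m)) M
      (@FirstOrder.Language.sumStructure L (constLang m) M inst (constStructure m c))
      n :=
  statement19_general (inst := inst) n m h c

end MonadicNIP
end
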